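/- arXiv:1412.2609 — 6 statements merged into one kernel-verified Lean document; each statement's English description precedes it below -/
import Mathlib

section
/- Let (v_n)_{n≥1} be a sequence of real numbers such that the power series ∑_{n≥1} v_n t^n has radius of convergence ρ > 0. For an integer m ≥ 1 and a complex number z with |z| < ρ, put ψ_{m,v}(z) = ∑_{n=1}^{∞} v_{mn}·z^{mn}, and write ψ_v = ψ_{1,v}. Then for every real number t with 0 < t < ρ/q, all the series below converge absolutely and ∑_{f=1}^{∞} f·Φ_f·ψ_{f,v}(t) = ψ_v(t) + ψ_v(q·t) − ∑_{j=1}^{2g} ψ_v(√q·ω_j·t). -/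
/-!
Expanding `ψ_{f,v}(t) = ∑ₙ v_{fn} t^{fn}`, the left-hand side becomes the double series
`∑_{f,n} f Φ_f v_{fn} t^{fn}`. Grouping its terms by `N = f n` gives
`∑_N (∑_{d ∣ N} d Φ_d) v_N t^N = ∑_N N_N v_N t^N`, and substituting
`N_N = q^N + 1 - q^{N/2} ∑ⱼ ω_j^N` splits this into the three power series on the right.
The regrouping is legitimate because the double series converges absolutely:
`∑_{d ∣ N} d Φ_d = N_N ≤ (2 + 2g) q^N`, and `∑ v_N (q t)^N` converges absolutely since `q t < ρ`.
-/

section DivisorRearrangement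

variable {R : Type*} [NormedRing R]

lemma sum_divisorsAntidiagonal_subtype_mul (N : ℕ) (a : ℕ → R) (y : R) :
    ∑ c : N.divisorsAntidiagonal, a c.1.1 * y = (∑ d ∈ N.divisors, a d) * y := by
  rw [Finset.sum_mul, Finset.univ_eq_attach,
    Finset.sum_attach N.divisorsAntidiagonal (fun p => a p.1 * y),
    Nat.sum_divisorsAntidiagonal (fun d _ => a d * y)]

lemma mul_comp_mul_sigmaAntidiagonalEquivProd (a x : ℕ → R)
    (s : Σ N : ℕ+, Nat.divisorsAntidiagonal N) :
    a (sigmaAntidiagonalEquivProd s).1 *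
        x ((sigmaAntidiagonalEquivProd s).1 * (sigmaAntidiagonalEquivProd s).2) =
      a s.2.1.1 * x s.1 :=
  congrArg (fun n => a s.2.1.1 * x n) (divisorsAntidiagonalFactors_eq s.2)

variable {a x : ℕ → R}

lemma summable_norm_mul_comp_mul
    (h : Summable fun N : ℕ+ => (∑ d ∈ (N : ℕ).divisors, ‖a d‖) * ‖x N‖) :
    Summable fun p : ℕ+ × ℕ+ => ‖a p.1 * x (p.1 * p.2)‖ := by
  rw [← sigmaAntidiagonalEquivProd.summable_iff, Function.comp_def]
  simp only [mul_comp_mul_sigmaAntidiagonalEquivProd]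
  rw [summable_sigma_of_nonneg fun _ => norm_nonneg _]
  refine ⟨fun _ => Summable.of_finite,
    h.of_nonneg_of_le (fun _ => tsum_nonneg fun _ => norm_nonneg _) fun N => ?_⟩
  rw [tsum_fintype, ← sum_divisorsAntidiagonal_subtype_mul]
  exact Finset.sum_le_sum fun c _ => norm_mul_le _ _

lemma summable_norm_tsum_mul_comp_mul
    (h : Summable fun N : ℕ+ => (∑ d ∈ (N : ℕ).divisors, ‖a d‖) * ‖x N‖) :
    Summable fun d : ℕ+ => ‖∑' n : ℕ+, a d * x (d * n)‖ :=
  have hs := summable_norm_mul_comp_mul h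
  hs.prod.of_nonneg_of_le (fun _ => norm_nonneg _) fun d =>
    norm_tsum_le_tsum_norm (hs.prod_factor d)

lemma tsum_tsum_mul_comp_mul_eq_tsum_divisors [CompleteSpace R]
    (h : Summable fun N : ℕ+ => (∑ d ∈ (N : ℕ).divisors, ‖a d‖) * ‖x N‖) :
    ∑' d : ℕ+, ∑' n : ℕ+, a d * x (d * n) = ∑' N : ℕ+, (∑ d ∈ (N : ℕ).divisors, a d) * x N := by
  have hs := (summable_norm_mul_comp_mul h).of_norm
  have hσ := sigmaAntidiagonalEquivProd.summable_iff.mpr hs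
  rw [Function.comp_def] at hσ
  simp only [mul_comp_mul_sigmaAntidiagonalEquivProd] at hσ
  rw [← hs.tsum_prod, ← sigmaAntidiagonalEquivProd.tsum_eq]
  simp only [mul_comp_mul_sigmaAntidiagonalEquivProd]
  rw [hσ.tsum_sigma]
  refine tsum_congr fun N => ?_
  rw [tsum_fintype]
  exact sum_divisorsAntidiagonal_subtype_mul N a (x N)

end DivisorRearrangement

lemma Summable.comp_mul_succ {α : Type*} [UniformSpace α] [AddCommGroup α] [IsUniformAddGroup α]
    [CompleteSpace α] {f : ℕ → α} (hf : Summable f) {m : ℕ} (hm : 0 < m) :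
    Summable fun n => f (m * (n + 1)) :=
  hf.comp_injective fun n n' h => by
    have := Nat.eq_of_mul_eq_mul_left hm h
    omega

lemma summable_sum_divisors_norm_mul {a c : ℕ → ℂ} {C r : ℝ} {z : ℂ} (hr : 0 ≤ r)
    (ha : ∀ N : ℕ+, ∑ d ∈ (N : ℕ).divisors, ‖a d‖ ≤ C * r ^ (N : ℕ))
    (hc : Summable fun n => ‖c n * (r * z) ^ n‖) :
    Summable fun N : ℕ+ => (∑ d ∈ (N : ℕ).divisors, ‖a d‖) * ‖c N * z ^ (N : ℕ)‖ := by
  refine Summable.of_nonneg_of_le (fun _ => by positivity) (fun N => ?_)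
    ((hc.comp_injective PNat.coe_injective).mul_left C)
  calc (∑ d ∈ (N : ℕ).divisors, ‖a d‖) * ‖c N * z ^ (N : ℕ)‖
      ≤ C * r ^ (N : ℕ) * ‖c N * z ^ (N : ℕ)‖ := by gcongr; exact ha N
    _ = C * ‖c N * (r * z) ^ (N : ℕ)‖ := by
      simp only [norm_mul, norm_pow, mul_pow, Complex.norm_real, Real.norm_of_nonneg hr]
      ring

lemma le_of_ofReal_eq_pow_add_one_sub_mul_sum_pow {ι : Type*} [Fintype ι] {q : ℝ} (hq : 1 ≤ q)
    {ω : ι → ℂ} (hω : ∀ j, ‖ω j‖ = 1) {f : ℕ} {N : ℝ}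
    (hN : (N : ℂ) = (q : ℂ) ^ f + 1 - (√q : ℂ) ^ f * ∑ j, ω j ^ f) :
    N ≤ (2 + Fintype.card ι) * q ^ f := by
  have hsqrt : √q ≤ q := Real.sqrt_le_self_iff.mpr (Or.inr hq)
  have hsum : ‖∑ j, ω j ^ f‖ ≤ Fintype.card ι := by
    simpa [hω] using norm_sum_le Finset.univ fun j => ω j ^ f
  have hone : 1 ≤ q ^ f := one_le_pow₀ hq
  calc N ≤ ‖(N : ℂ)‖ := by rw [Complex.norm_real]; exact le_abs_self N
    _ ≤ q ^ f + 1 + √q ^ f * Fintype.card ι := by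
        rw [hN]
        refine (norm_sub_le _ _).trans (add_le_add ((norm_add_le _ _).trans ?_) ?_)
        · simp [abs_of_nonneg (by linarith : (0 : ℝ) ≤ q)]
        · rw [norm_mul, norm_pow, Complex.norm_real, Real.norm_of_nonneg (Real.sqrt_nonneg q)]
          gcongr
    _ ≤ q ^ f + q ^ f + q ^ f * Fintype.card ι := by gcongr
    _ = (2 + Fintype.card ι) * q ^ f := by ring

lemma pow_add_one_sub_mul_sum_pow_mul {ι : Type*} [Fintype ι] (Q s c y : ℂ) (ω : ι → ℂ) (N : ℕ) :
    (Q ^ N + 1 - s ^ N * ∑ j, ω j ^ N) * (c * y ^ N) =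
      c * y ^ N + c * (Q * y) ^ N - ∑ j, c * (s * ω j * y) ^ N := by
  simp only [sub_mul, add_mul, one_mul, Finset.mul_sum, Finset.sum_mul]
  congr 1
  · ring
  · exact Finset.sum_congr rfl fun j _ => by ring

lemma tsum_pow_add_one_sub_mul_sum_pow_mul {ι : Type*} [Fintype ι] {c : ℕ → ℂ} {Q s y : ℂ}
    {ω : ι → ℂ} (h₁ : Summable fun N : ℕ+ => c N * y ^ (N : ℕ))
    (h₂ : Summable fun N : ℕ+ => c N * (Q * y) ^ (N : ℕ))
    (h₃ : ∀ j, Summable fun N : ℕ+ => c N * (s * ω j * y) ^ (N : ℕ)) :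
    ∑' N : ℕ+, (Q ^ (N : ℕ) + 1 - s ^ (N : ℕ) * ∑ j, ω j ^ (N : ℕ)) * (c N * y ^ (N : ℕ)) =
      ∑' N : ℕ+, c N * y ^ (N : ℕ) + ∑' N : ℕ+, c N * (Q * y) ^ (N : ℕ) -
        ∑ j, ∑' N : ℕ+, c N * (s * ω j * y) ^ (N : ℕ) := by
  simp only [pow_add_one_sub_mul_sum_pow_mul]
  rw [(h₁.add h₂).tsum_sub (summable_sum fun j _ => h₃ j), h₁.tsum_add h₂,
    Summable.tsum_finsetSum fun j _ => h₃ j]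

theorem explicit_formula_general (q g : ℕ) (hq : 2 ≤ q)
    (ω : Fin (2 * g) → ℂ) (hω : ∀ j, ‖ω j‖ = 1)
    (NF : ℕ → ℝ)
    (hNF : ∀ f : ℕ, 1 ≤ f →
      (NF f : ℂ) = (q : ℂ) ^ f + 1 - (Real.sqrt q : ℂ) ^ f * ∑ j, ω j ^ f)
    (Φ : ℕ → ℕ)
    (hΦ : ∀ n : ℕ, 1 ≤ n → (∑ d ∈ n.divisors, (d * Φ d : ℝ)) = NF n)
    (v : ℕ → ℝ) (ρ : ℝ)
    (hconv : ∀ z : ℂ, ‖z‖ < ρ → Summable (fun n : ℕ => ‖(v n : ℂ) * z ^ n‖))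
    (ψ : ℕ → ℂ → ℂ)
    (hψ : ∀ m : ℕ, ∀ z : ℂ, ψ m z = ∑' n : ℕ, (v (m * (n + 1)) : ℂ) * z ^ (m * (n + 1)))
    (t : ℝ) (ht0 : 0 < t) (ht : t < ρ / q) :
    (∀ m : ℕ, 1 ≤ m → ∀ z : ℂ, ‖z‖ ≤ (q : ℝ) * t →
      Summable (fun n : ℕ => ‖(v (m * (n + 1)) : ℂ) * z ^ (m * (n + 1))‖)) ∧
    Summable (fun f : ℕ => ‖((f : ℂ) + 1) * ((Φ (f + 1) : ℕ) : ℂ) * ψ (f + 1) (t : ℂ)‖) ∧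
    ∑' f : ℕ, ((f : ℂ) + 1) * ((Φ (f + 1) : ℕ) : ℂ) * ψ (f + 1) (t : ℂ) =
      ψ 1 (t : ℂ) + ψ 1 ((q : ℂ) * t) - ∑ j, ψ 1 ((Real.sqrt q : ℂ) * ω j * t) := by
  have hq1 : (1 : ℝ) ≤ q := by exact_mod_cast (by omega : 1 ≤ q)
  have hqt : (q : ℝ) * t < ρ := by rwa [lt_div_iff₀ (by positivity), mul_comm] at ht
  have hψ' : ∀ m z, ψ m z = ∑' n : ℕ+, (v (m * n) : ℂ) * z ^ (m * n : ℕ) := fun m z => by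
    rw [hψ, tsum_pnat_eq_tsum_succ (f := fun n => (v (m * n) : ℂ) * z ^ (m * n))]
  set a : ℕ → ℂ := fun d => d * Φ d with ha
  set x : ℕ → ℂ := fun N => v N * t ^ N with hx
  have hdiv : ∀ N : ℕ+, ∑ d ∈ (N : ℕ).divisors, a d = NF N := fun N => by
    simp [ha, ← hΦ N N.pos]
  have hdiv_le : ∀ N : ℕ+, ∑ d ∈ (N : ℕ).divisors, ‖a d‖ ≤ (2 + 2 * g) * (q : ℝ) ^ (N : ℕ) :=
    fun N => by
      have hnorm : ∑ d ∈ (N : ℕ).divisors, ‖a d‖ = NF N := by simp [ha, ← hΦ N N.pos]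
      simpa [hnorm] using le_of_ofReal_eq_pow_add_one_sub_mul_sum_pow hq1 hω
        (by simpa using hNF N N.pos)
  have hbound : Summable fun N : ℕ+ => (∑ d ∈ (N : ℕ).divisors, ‖a d‖) * ‖x N‖ :=
    summable_sum_divisors_norm_mul (c := fun n => (v n : ℂ)) (z := t) (by positivity) hdiv_le
      (hconv _ (by simpa [abs_of_pos ht0] using hqt))
  have hterm : ∀ f : ℕ, ((f : ℂ) + 1) * ((Φ (f + 1) : ℕ) : ℂ) * ψ (f + 1) (t : ℂ) =
      ∑' n : ℕ+, a (f + 1) * x ((f + 1) * n) := fun f => by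
    rw [hψ', ← tsum_mul_left]
    exact tsum_congr fun n => by simp only [ha, hx]; push_cast; ring
  refine ⟨fun m hm z hz => (hconv z (hz.trans_lt hqt)).comp_mul_succ hm, ?_, ?_⟩
  · simp_rw [hterm]
    exact summable_pnat_iff_summable_succ (f := fun d => ‖∑' n : ℕ+, a d * x (d * n)‖) |>.mp
      (summable_norm_tsum_mul_comp_mul hbound)
  have hsummable : ∀ z : ℂ, ‖z‖ ≤ q * t → Summable fun N : ℕ+ => (v N : ℂ) * z ^ (N : ℕ) :=
    fun z hz => (hconv z (hz.trans_lt hqt)).of_norm.comp_injective PNat.coe_injective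
  have hsqrt : √(q : ℝ) ≤ q := Real.sqrt_le_self_iff.mpr (Or.inr hq1)
  have h₁ := hsummable t (by simp [abs_of_pos ht0]; nlinarith)
  have h₂ := hsummable (q * t) (by simp [abs_of_pos ht0])
  have h₃ : ∀ j, Summable fun N : ℕ+ => (v N : ℂ) * (√q * ω j * t) ^ (N : ℕ) := fun j =>
    hsummable _ (by simp [hω, abs_of_pos ht0, abs_of_nonneg (Real.sqrt_nonneg _)]; gcongr)
  have hweil : ∀ N : ℕ+, (∑ d ∈ (N : ℕ).divisors, a d) * x N =
      ((q : ℂ) ^ (N : ℕ) + 1 - (√q : ℂ) ^ (N : ℕ) * ∑ j, ω j ^ (N : ℕ)) * (v N * t ^ (N : ℕ)) :=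
    fun N => by rw [hdiv, hNF N N.pos]
  rw [tsum_congr hterm, ← tsum_pnat_eq_tsum_succ (f := fun d => ∑' n : ℕ+, a d * x (d * n)),
    tsum_tsum_mul_comp_mul_eq_tsum_divisors hbound, tsum_congr hweil,
    tsum_pow_add_one_sub_mul_sum_pow_mul (c := fun n => (v n : ℂ)) h₁ h₂ h₃]
  simp only [hψ', one_mul]

theorem explicit_formula (q g : ℕ) (hq : 2 ≤ q) (hg : 1 ≤ g)
    (ω : Fin (2 * g) → ℂ) (hω : ∀ j, ‖ω j‖ = 1)
    (hconj : Multiset.map (starRingEnd ℂ) (List.ofFn ω : Multiset ℂ) = (List.ofFn ω : Multiset ℂ))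
    (NF : ℕ → ℝ)
    (hNF : ∀ f : ℕ, 1 ≤ f →
      (NF f : ℂ) = (q : ℂ) ^ f + 1 - (Real.sqrt q : ℂ) ^ f * ∑ j, ω j ^ f)
    (Φ : ℕ → ℕ)
    (hΦ : ∀ n : ℕ, 1 ≤ n → (∑ d ∈ n.divisors, (d * Φ d : ℝ)) = NF n)
    (v : ℕ → ℝ) (ρ : ℝ) (hρ : 0 < ρ)
    (hconv : ∀ z : ℂ, ‖z‖ < ρ → Summable (fun n : ℕ => ‖(v n : ℂ) * z ^ n‖))
    (ψ : ℕ → ℂ → ℂ)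
    (hψ : ∀ m : ℕ, ∀ z : ℂ, ψ m z = ∑' n : ℕ, (v (m * (n + 1)) : ℂ) * z ^ (m * (n + 1)))
    (t : ℝ) (ht0 : 0 < t) (ht : t < ρ / q) :
    (∀ m : ℕ, 1 ≤ m → ∀ z : ℂ, ‖z‖ ≤ (q : ℝ) * t →
      Summable (fun n : ℕ => ‖(v (m * (n + 1)) : ℂ) * z ^ (m * (n + 1))‖)) ∧
    Summable (fun f : ℕ => ‖((f : ℂ) + 1) * ((Φ (f + 1) : ℕ) : ℂ) * ψ (f + 1) (t : ℂ)‖) ∧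
    ∑' f : ℕ, ((f : ℂ) + 1) * ((Φ (f + 1) : ℕ) : ℂ) * ψ (f + 1) (t : ℂ) =
      ψ 1 (t : ℂ) + ψ 1 ((q : ℂ) * t) - ∑ j, ψ 1 ((Real.sqrt q : ℂ) * ω j * t) :=
  explicit_formula_general q g hq ω hω NF hNF Φ hΦ v ρ hconv ψ hψ t ht0 ht
end

section
/- For every integer N ≥ 1, one has |log h − g·log q − ∑_{f=1}^{N} N_f/(f·q^f) + ∑_{n=1}^{N} (1 + q^{−n})/n| ≤ 2g/((√q − 1)·(N+1)·q^{N/2}), where log denotes the natural logarithm. -/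
/-!
Put `w_j = ω_j / √q`, so that `‖w_j‖ = q^{-1/2} < 1` and `h = q^g ∏ (1 - w_j)`.
Expanding `-log ‖1 - w‖ = Re ∑ wⁿ/n` shows that `g log q - log h` is the sum of the series
`aₙ = Re (∑_j w_jⁿ) / n`, while the formula for `N_f` says
`N_f / (f q^f) = (1 + q^{-f}) / f - a_f`. The quantity to bound is therefore the tail
`∑_{n > N} aₙ`, and there `|aₙ| ≤ 2g q^{-n/2} / (N + 1)`, so a geometric series bounds it.
-/

open Finset

theorem HasSum.norm_sub_sum_range_le_of_geometric_bound {α : Type*} [SeminormedAddCommGroup α]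
    {f : ℕ → α} {a : α} {C r : ℝ} (hf : HasSum f a) (hr : r < 1) (N : ℕ)
    (hb : ∀ n, N ≤ n → ‖f n‖ ≤ C * r ^ n) :
    ‖a - ∑ i ∈ range N, f i‖ ≤ C * r ^ N / (1 - r) := by
  have htail : HasSum (fun k ↦ f (k + N)) (a - ∑ i ∈ range N, f i) :=
    (hasSum_nat_add_iff' N).2 hf
  have hb' : ∀ k, ‖f (k + N)‖ ≤ C * r ^ N * r ^ k := fun k ↦ by
    simpa only [pow_add, mul_assoc, mul_comm (r ^ k)] using hb (k + N) (Nat.le_add_left N k)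
  rw [norm_sub_rev]
  simpa using norm_sub_le_of_geometric_bound_of_hasSum hr hb' htail 0

namespace Complex

variable {ι : Type*} [Fintype ι] {w : ι → ℂ}

theorem prod_one_sub_ne_zero (hw : ∀ j, ‖w j‖ < 1) : ∏ j, (1 - w j) ≠ 0 :=
  prod_ne_zero_iff.2 fun j _ ↦ sub_ne_zero.2 fun h ↦ by simpa [← h] using hw j

theorem hasSum_re_sum_pow_div_neg_log_norm_prod (hw : ∀ j, ‖w j‖ < 1) :
    HasSum (fun n : ℕ ↦ (∑ j, w j ^ n).re / n) (-Real.log ‖∏ j, (1 - w j)‖) := by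
  have hlog : ∀ j, HasSum (fun n : ℕ ↦ (w j ^ n / n).re) (-Real.log ‖1 - w j‖) := fun j ↦
    by simpa [log_re] using hasSum_re (hasSum_taylorSeries_neg_log (hw j))
  convert hasSum_sum fun j _ ↦ hlog j using 1
  · ext n
    rw [← re_sum, ← sum_div, ← ofReal_natCast, div_ofReal_re]
  · have hne : ∀ j ∈ univ, ‖1 - w j‖ ≠ 0 := fun j hj ↦
      norm_ne_zero_iff.2 (prod_ne_zero_iff.1 (prod_one_sub_ne_zero hw) j hj)
    rw [norm_prod, Real.log_prod hne, sum_neg_distrib]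

theorem hasSum_re_sum_pow_div_sub_log {c x : ℝ} (hc : 0 < c) (k : ℕ) (hw : ∀ j, ‖w j‖ < 1)
    (hx : (x : ℂ) = (c : ℂ) ^ k * ∏ j, (1 - w j)) :
    HasSum (fun n : ℕ ↦ (∑ j, w j ^ n).re / n) (k * Real.log c - Real.log x) := by
  have hlogx : Real.log x = k * Real.log c + Real.log ‖∏ j, (1 - w j)‖ := by
    rw [← Real.log_abs, ← Real.norm_eq_abs, ← norm_real, hx, norm_mul, norm_pow, norm_real,
      Real.norm_of_nonneg hc.le,
      Real.log_mul (by positivity) (norm_ne_zero_iff.2 (prod_one_sub_ne_zero hw)), Real.log_pow]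
  rw [hlogx, sub_add_cancel_left]
  exact hasSum_re_sum_pow_div_neg_log_norm_prod hw

theorem abs_re_sum_pow_div_le {r : ℝ} (hw : ∀ j, ‖w j‖ = r) {m n : ℕ} (hm : 0 < m)
    (hmn : m ≤ n) : |(∑ j, w j ^ n).re / n| ≤ Fintype.card ι / m * r ^ n := by
  have hsum : |(∑ j, w j ^ n).re| ≤ Fintype.card ι * r ^ n :=
    calc |(∑ j, w j ^ n).re| ≤ ∑ j, ‖w j ^ n‖ :=
          (abs_re_le_norm _).trans (norm_sum_le _ _)
      _ = Fintype.card ι * r ^ n := by simp [norm_pow, hw]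
  rw [abs_div, Nat.abs_cast, div_mul_eq_mul_div]
  exact div_le_div₀ ((abs_nonneg _).trans hsum) hsum (by positivity) (by exact_mod_cast hmn)

theorem div_mul_pow_eq_sub_re_sum_pow_div {q x : ℝ} (hq : 0 < q) (ω : ι → ℂ) (f : ℕ)
    (hx : (x : ℂ) = (q : ℂ) ^ f + 1 - (Real.sqrt q : ℂ) ^ f * ∑ j, ω j ^ f) :
    x / (f * q ^ f) =
      (1 + (q ^ f)⁻¹) / f - (∑ j, (ω j * (Real.sqrt q : ℂ)⁻¹) ^ f).re / f := by
  have hxre : x = q ^ f + 1 - Real.sqrt q ^ f * (∑ j, ω j ^ f).re := by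
    have := congrArg re hx
    rwa [← ofReal_pow, ← ofReal_pow, sub_re, re_ofReal_mul, ofReal_re] at this
  have hre : (∑ j, (ω j * (Real.sqrt q : ℂ)⁻¹) ^ f).re =
      (∑ j, ω j ^ f).re / Real.sqrt q ^ f := by
    simp only [mul_pow, ← sum_mul, inv_pow, ← ofReal_pow, ← ofReal_inv, re_mul_ofReal,
      div_eq_mul_inv]
  have hsq : q ^ f = Real.sqrt q ^ f * Real.sqrt q ^ f := by
    rw [← mul_pow, Real.mul_self_sqrt hq.le]
  have hsqrt : 0 < Real.sqrt q := Real.sqrt_pos.2 hq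
  rw [hxre, hre, hsq]
  field_simp

end Complex

theorem log_class_number_formula_general (q g : ℕ) (hq : 2 ≤ q)
    (ω : Fin (2 * g) → ℂ) (hω : ∀ j, ‖ω j‖ = 1)
    (NF : ℕ → ℝ)
    (hNF : ∀ f : ℕ, 1 ≤ f →
      (NF f : ℂ) = (q : ℂ) ^ f + 1 - (Real.sqrt q : ℂ) ^ f * ∑ j, ω j ^ f)
    (h : ℝ)
    (hh : (h : ℂ) = (q : ℂ) ^ g * ∏ j, (1 - ω j * (Real.sqrt q : ℂ)⁻¹))
    (N : ℕ) :
    |Real.log h - (g : ℝ) * Real.log q -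
        ∑ f ∈ Finset.Icc 1 N, NF f / ((f : ℝ) * (q : ℝ) ^ f) +
        ∑ n ∈ Finset.Icc 1 N, (1 + ((q : ℝ) ^ n)⁻¹) / (n : ℝ)| ≤
      2 * (g : ℝ) / ((Real.sqrt q - 1) * ((N : ℝ) + 1) * Real.sqrt q ^ N) := by
  set s := Real.sqrt q
  have hs : 1 < s := Real.lt_sqrt zero_le_one |>.2 (by norm_cast)
  set w : Fin (2 * g) → ℂ := fun j ↦ ω j * (s : ℂ)⁻¹
  have hw : ∀ j, ‖w j‖ = s⁻¹ := fun j ↦ by simp [w, hω, (zero_lt_one.trans hs).le]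
  have hw1 : ∀ j, ‖w j‖ < 1 := fun j ↦ hw j ▸ inv_lt_one_of_one_lt₀ hs
  set a : ℕ → ℝ := fun n ↦ (∑ j, w j ^ n).re / n
  have hsum : HasSum a (g * Real.log q - Real.log h) :=
    Complex.hasSum_re_sum_pow_div_sub_log (by positivity) g hw1 (by rw [hh]; simp [w])
  have hterm :
      ∀ f ∈ Icc 1 N, NF f / (f * (q : ℝ) ^ f) = (1 + ((q : ℝ) ^ f)⁻¹) / f - a f :=
    fun f hf ↦ Complex.div_mul_pow_eq_sub_re_sum_pow_div (by positivity) ω f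
      (by exact_mod_cast hNF f (mem_Icc.1 hf).1)
  have htail : ∀ n, N + 1 ≤ n → ‖a n‖ ≤ 2 * g / (N + 1) * s⁻¹ ^ n := fun n hn ↦
    (Complex.abs_re_sum_pow_div_le hw N.succ_pos hn).trans_eq (by simp)
  have hsplit : ∑ i ∈ range (N + 1), a i = ∑ f ∈ Icc 1 N, a f := by
    rw [range_eq_Ico, sum_eq_sum_Ico_succ_bot (by omega : 0 < N + 1), Ico_add_one_right_eq_Icc]
    simp [a]
  calc _ = ‖(g * Real.log q - Real.log h) - ∑ i ∈ range (N + 1), a i‖ := by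
        rw [Real.norm_eq_abs, ← abs_neg, sum_congr rfl hterm, sum_sub_distrib, hsplit]
        ring_nf
    _ ≤ 2 * g / (N + 1) * s⁻¹ ^ (N + 1) / (1 - s⁻¹) :=
        hsum.norm_sub_sum_range_le_of_geometric_bound (inv_lt_one_of_one_lt₀ hs) (N + 1) htail
    _ = _ := by
        have : s - 1 ≠ 0 := sub_ne_zero.2 hs.ne'
        rw [inv_pow]
        field_simp
        ring

theorem log_class_number_formula (q g : ℕ) (hq : 2 ≤ q) (hg : 1 ≤ g)
    (ω : Fin (2 * g) → ℂ) (hω : ∀ j, ‖ω j‖ = 1)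
    (hconj : Multiset.map (starRingEnd ℂ) (List.ofFn ω : Multiset ℂ) = (List.ofFn ω : Multiset ℂ))
    (NF : ℕ → ℝ)
    (hNF : ∀ f : ℕ, 1 ≤ f →
      (NF f : ℂ) = (q : ℂ) ^ f + 1 - (Real.sqrt q : ℂ) ^ f * ∑ j, ω j ^ f)
    (h : ℝ)
    (hh : (h : ℂ) = (q : ℂ) ^ g * ∏ j, (1 - ω j * (Real.sqrt q : ℂ)⁻¹))
    (N : ℕ) (hN : 1 ≤ N) :
    |Real.log h - (g : ℝ) * Real.log q -
        ∑ f ∈ Finset.Icc 1 N, NF f / ((f : ℝ) * (q : ℝ) ^ f) +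
        ∑ n ∈ Finset.Icc 1 N, (1 + ((q : ℝ) ^ n)⁻¹) / (n : ℝ)| ≤
      2 * (g : ℝ) / ((Real.sqrt q - 1) * ((N : ℝ) + 1) * Real.sqrt q ^ N) :=
  log_class_number_formula_general q g hq ω hω NF hNF h hh N
end

section
/- For every integer N ≥ 1, one has h ≥ q^g · exp( ∑_{f=1}^{N} N_f/(f·q^f) − ∑_{n=1}^{N} (1 + q^{−n})/n − 2g/((√q − 1)·(N+1)·q^{N/2}) ). -/
/-! With `z_j = ω_j / √q` we have `h = q^g ∏ (1 - z_j)` and `‖z_j‖ = q^{-1/2} < 1`, so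
`h = q^g exp (∑_j log (1 - z_j))`; stability of the `ω_j` under conjugation makes this sum real,
which also shows `h > 0`. Expanding `log (1 - z) = -∑_{f ≥ 1} z^f / f` and using
`∑_j z_j^f = (q^f + 1 - N_f) / q^f`, the terms `f ≤ N` give the two sums in the exponent, and each
of the `2g` tails is bounded by `‖z‖^{N+1} / ((N + 1)(1 - ‖z‖))`. -/

open Finset Complex ComplexConjugate

lemma sum_comp_eq_of_map_ofFn_eq {α M : Type*} [AddCommMonoid M] {n : ℕ} (ω : Fin n → α)
    (σ : α → α) (hσ : Multiset.map σ (List.ofFn ω : Multiset α) = (List.ofFn ω : Multiset α))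
    (φ : α → M) : ∑ j, φ (σ (ω j)) = ∑ j, φ (ω j) := by
  have hsum : ∀ ψ : α → M, ((List.ofFn ω : Multiset α).map ψ).sum = ∑ j, ψ (ω j) := by
    simp [List.sum_ofFn]
  calc ∑ j, φ (σ (ω j)) = ((List.ofFn ω : Multiset α).map (φ ∘ σ)).sum := (hsum (φ ∘ σ)).symm
    _ = ((List.ofFn ω : Multiset α).map φ).sum := by rw [← Multiset.map_map, hσ]
    _ = ∑ j, φ (ω j) := hsum φ

namespace Complex

lemma log_one_sub_add_sum_Icc_norm_le {z : ℂ} (hz : ‖z‖ < 1) (N : ℕ) :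
    ‖log (1 - z) + ∑ f ∈ Icc 1 N, z ^ f / f‖ ≤ ‖z‖ ^ (N + 1) * (1 - ‖z‖)⁻¹ / (N + 1) := by
  have htaylor : logTaylor (N + 1) (-z) = -∑ f ∈ Icc 1 N, z ^ f / f := by
    rw [logTaylor, sum_range_succ', ← Ico_add_one_right_eq_Icc, sum_Ico_eq_sum_range,
      ← sum_neg_distrib]
    simp only [Nat.add_sub_cancel, CharP.cast_eq_zero, div_zero, add_zero]
    refine sum_congr rfl fun k _ => ?_
    rw [neg_pow z, ← mul_assoc, ← pow_add, add_comm 1 k,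
      (show Odd (k + 1 + 1 + (k + 1)) from ⟨k + 1, by ring⟩).neg_one_pow]
    ring
  simpa [htaylor, sub_eq_add_neg] using norm_log_sub_logTaylor_le N (z := -z) (by simpa using hz)

lemma neg_sum_re_sub_le_re_log_one_sub {z : ℂ} {ρ : ℝ} (hz : ‖z‖ ≤ ρ) (hρ : ρ < 1) (N : ℕ) :
    -∑ f ∈ Icc 1 N, (z ^ f).re / f - ρ ^ (N + 1) * (1 - ρ)⁻¹ / (N + 1) ≤ (log (1 - z)).re := by
  have hz1 : ‖z‖ < 1 := hz.trans_lt hρ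
  have hre : (log (1 - z) + ∑ f ∈ Icc 1 N, z ^ f / f).re =
      (log (1 - z)).re + ∑ f ∈ Icc 1 N, (z ^ f).re / f := by
    simp [re_sum, div_natCast_re]
  have hmono : ‖z‖ ^ (N + 1) * (1 - ‖z‖)⁻¹ / (N + 1) ≤ ρ ^ (N + 1) * (1 - ρ)⁻¹ / (N + 1) := by
    gcongr
    exact pow_nonneg ((norm_nonneg z).trans hz) _
  linarith [(abs_le.mp (abs_re_le_norm (log (1 - z) + ∑ f ∈ Icc 1 N, z ^ f / f))).1,
    log_one_sub_add_sum_Icc_norm_le hz1 N]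

lemma neg_sum_re_sub_le_re_sum_log_one_sub {ι : Type*} (s : Finset ι) {z : ι → ℂ} {ρ : ℝ}
    (hz : ∀ j ∈ s, ‖z j‖ ≤ ρ) (hρ : ρ < 1) (N : ℕ) :
    -∑ f ∈ Icc 1 N, (∑ j ∈ s, z j ^ f).re / f - #s * (ρ ^ (N + 1) * (1 - ρ)⁻¹ / (N + 1)) ≤
      (∑ j ∈ s, log (1 - z j)).re := by
  have hswap : ∑ f ∈ Icc 1 N, (∑ j ∈ s, z j ^ f).re / f =
      ∑ j ∈ s, ∑ f ∈ Icc 1 N, (z j ^ f).re / f := by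
    simp only [re_sum, sum_div]
    exact sum_comm
  rw [hswap, re_sum, ← nsmul_eq_mul, ← sum_const, ← sum_neg_distrib, ← sum_sub_distrib]
  exact sum_le_sum fun j hj => neg_sum_re_sub_le_re_log_one_sub (hz j hj) hρ N

lemma im_sum_log_one_sub_mul_ofReal {n : ℕ} (ω : Fin n → ℂ)
    (hconj : Multiset.map (starRingEnd ℂ) (List.ofFn ω : Multiset ℂ) = (List.ofFn ω : Multiset ℂ))
    (t : ℝ) (ht : ∀ j, ‖ω j * t‖ < 1) : (∑ j, log (1 - ω j * t)).im = 0 := by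
  rw [← conj_eq_iff_im, map_sum]
  have hlog : ∀ j, conj (log (1 - ω j * t)) = log (1 - conj (ω j) * t) := fun j => by
    rw [← log_conj _ (slitPlane_arg_ne_pi ?_)]
    · simp
    · simpa [sub_eq_add_neg] using
        mem_slitPlane_of_norm_lt_one (z := -(ω j * t)) (by simpa using ht j)
  simp_rw [hlog]
  exact sum_comp_eq_of_map_ofFn_eq ω _ hconj fun w => log (1 - w * t)

lemma prod_one_sub_mul_ofReal_eq_exp {n : ℕ} (ω : Fin n → ℂ)
    (hconj : Multiset.map (starRingEnd ℂ) (List.ofFn ω : Multiset ℂ) = (List.ofFn ω : Multiset ℂ))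
    (t : ℝ) (ht : ∀ j, ‖ω j * t‖ < 1) :
    ∏ j, (1 - ω j * t) = Real.exp (∑ j, log (1 - ω j * t)).re := by
  have hre : (((∑ j, log (1 - ω j * t)).re : ℝ) : ℂ) = ∑ j, log (1 - ω j * t) :=
    ext rfl (by simp only [ofReal_im, im_sum_log_one_sub_mul_ofReal ω hconj t ht])
  rw [ofReal_exp, hre, exp_sum]
  refine prod_congr rfl fun j _ => (exp_log fun h0 => (ht j).ne ?_).symm
  rw [← sub_eq_zero.mp h0, norm_one]

end Complex

lemma re_sum_pow_mul_inv_sqrt {n q : ℕ} (hq : 0 < q) (ω : Fin n → ℂ) (Nf : ℝ) {f : ℕ}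
    (hNf : (Nf : ℂ) = (q : ℂ) ^ f + 1 - (√q : ℂ) ^ f * ∑ j, ω j ^ f) :
    (∑ j, (ω j * ((√q)⁻¹ : ℝ)) ^ f).re = (q ^ f + 1 - Nf) / q ^ f := by
  have hsq : ((√q : ℝ) : ℂ) ^ 2 = q := by
    rw [← ofReal_pow, Real.sq_sqrt (Nat.cast_nonneg q)]; simp
  have hne : ((√q : ℝ) : ℂ) ≠ 0 := by simp [hq.ne']
  have : ∑ j, (ω j * ((√q)⁻¹ : ℝ)) ^ f = (((q ^ f + 1 - Nf) / q ^ f : ℝ) : ℂ) := by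
    simp only [ofReal_inv, mul_pow, inv_pow, ← sum_mul]
    push_cast
    rw [hNf, ← hsq]
    field_simp
    ring
  rw [this, ofReal_re]

lemma sum_div_sub_sum_eq_neg_sum_re_pow_mul_inv_sqrt {n q : ℕ} (hq : 0 < q) (ω : Fin n → ℂ)
    (NF : ℕ → ℝ) (hNF : ∀ f : ℕ, 1 ≤ f →
      (NF f : ℂ) = (q : ℂ) ^ f + 1 - (√q : ℂ) ^ f * ∑ j, ω j ^ f) (N : ℕ) :
    ∑ f ∈ Icc 1 N, NF f / ((f : ℝ) * (q : ℝ) ^ f) - ∑ f ∈ Icc 1 N, (1 + ((q : ℝ) ^ f)⁻¹) / f =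
      -∑ f ∈ Icc 1 N, (∑ j, (ω j * ((√q)⁻¹ : ℝ)) ^ f).re / f := by
  rw [← sum_sub_distrib, ← sum_neg_distrib]
  refine sum_congr rfl fun f hf => ?_
  have hf1 : 1 ≤ f := (mem_Icc.mp hf).1
  rw [re_sum_pow_mul_inv_sqrt hq ω (NF f) (hNF f hf1)]
  have : (f : ℝ) ≠ 0 := by positivity
  field_simp
  ring

theorem class_number_lower_bound_general (q g : ℕ) (hq : 2 ≤ q)
    (ω : Fin (2 * g) → ℂ) (hω : ∀ j, ‖ω j‖ = 1)
    (hconj : Multiset.map (starRingEnd ℂ) (List.ofFn ω : Multiset ℂ) = (List.ofFn ω : Multiset ℂ))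
    (NF : ℕ → ℝ)
    (hNF : ∀ f : ℕ, 1 ≤ f →
      (NF f : ℂ) = (q : ℂ) ^ f + 1 - (Real.sqrt q : ℂ) ^ f * ∑ j, ω j ^ f)
    (h : ℝ)
    (hh : (h : ℂ) = (q : ℂ) ^ g * ∏ j, (1 - ω j * (Real.sqrt q : ℂ)⁻¹))
    (N : ℕ) :
    (q : ℝ) ^ g * Real.exp (∑ f ∈ Finset.Icc 1 N, NF f / ((f : ℝ) * (q : ℝ) ^ f) -
        ∑ n ∈ Finset.Icc 1 N, (1 + ((q : ℝ) ^ n)⁻¹) / (n : ℝ) -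
        2 * (g : ℝ) / ((Real.sqrt q - 1) * ((N : ℝ) + 1) * Real.sqrt q ^ N)) ≤ h := by
  have hr : 1 < √(q : ℝ) := Real.lt_sqrt zero_le_one |>.mpr (by exact_mod_cast hq)
  have hz : ∀ j, ‖ω j * ((√q)⁻¹ : ℝ)‖ = (√q)⁻¹ := fun j => by
    simp [hω, abs_of_pos (zero_lt_one.trans hr)]
  have hz1 : ∀ j, ‖ω j * ((√q)⁻¹ : ℝ)‖ < 1 := fun j =>
    (hz j).trans_lt (inv_lt_one_of_one_lt₀ hr)
  rw [← ofReal_inv, Complex.prod_one_sub_mul_ofReal_eq_exp ω hconj _ hz1, ← ofReal_natCast,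
    ← ofReal_pow, ← ofReal_mul] at hh
  have htail : 2 * (g : ℝ) / ((√q - 1) * ((N : ℝ) + 1) * √q ^ N) =
      #(univ : Finset (Fin (2 * g))) * ((√q)⁻¹ ^ (N + 1) * (1 - (√q)⁻¹)⁻¹ / (N + 1)) := by
    have : √(q : ℝ) - 1 ≠ 0 := by linarith
    have : √(q : ℝ) ≠ 0 := by positivity
    rw [card_univ, Fintype.card_fin, inv_pow]
    field_simp
    push_cast
    ring
  rw [ofReal_injective hh, sum_div_sub_sum_eq_neg_sum_re_pow_mul_inv_sqrt (by omega) ω NF hNF,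
    htail]
  gcongr
  exact Complex.neg_sum_re_sub_le_re_sum_log_one_sub _ (fun j _ => (hz j).le)
    (inv_lt_one_of_one_lt₀ hr) N

theorem class_number_lower_bound (q g : ℕ) (hq : 2 ≤ q) (hg : 1 ≤ g)
    (ω : Fin (2 * g) → ℂ) (hω : ∀ j, ‖ω j‖ = 1)
    (hconj : Multiset.map (starRingEnd ℂ) (List.ofFn ω : Multiset ℂ) = (List.ofFn ω : Multiset ℂ))
    (NF : ℕ → ℝ)
    (hNF : ∀ f : ℕ, 1 ≤ f →
      (NF f : ℂ) = (q : ℂ) ^ f + 1 - (Real.sqrt q : ℂ) ^ f * ∑ j, ω j ^ f)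
    (h : ℝ)
    (hh : (h : ℂ) = (q : ℂ) ^ g * ∏ j, (1 - ω j * (Real.sqrt q : ℂ)⁻¹))
    (N : ℕ) (hN : 1 ≤ N) :
    (q : ℝ) ^ g * Real.exp (∑ f ∈ Finset.Icc 1 N, NF f / ((f : ℝ) * (q : ℝ) ^ f) -
        ∑ n ∈ Finset.Icc 1 N, (1 + ((q : ℝ) ^ n)⁻¹) / (n : ℝ) -
        2 * (g : ℝ) / ((Real.sqrt q - 1) * ((N : ℝ) + 1) * Real.sqrt q ^ N)) ≤ h :=
  class_number_lower_bound_general q g hq ω hω hconj NF hNF h hh N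
end

section
/- For every integer N ≥ 1, one has h ≤ q^g · exp( ∑_{f=1}^{N} N_f/(f·q^f) − ∑_{n=1}^{N} (1 + q^{−n})/n + 2g/((√q − 1)·(N+1)·q^{N/2}) ). -/
/-! With `z j = ω j / √q` we have `h = q ^ g * ∏ (1 - z j)` and `‖z j‖ = q ^ (-1/2) < 1`, so the
Taylor series of `-log (1 - z)` gives `log (|h| / q ^ g) = -∑_{n ≥ 1} Re (∑ j, z j ^ n) / n`, where
`∑ j, z j ^ n = (q ^ n + 1 - N_n) / q ^ n`. The terms with `n ≤ N` are the explicit sums of the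
bound; the tail is at most `2g ∑_{n > N} q ^ (-n/2) / n ≤ 2g q ^ (-(N+1)/2) / ((N + 1) (1 - q ^ (-1/2)))`. -/

open Finset

theorem hasSum_re_sum_pow_div_neg_log_norm_prod_one_sub {ι : Type*} [Fintype ι] (z : ι → ℂ)
    (hz : ∀ j, ‖z j‖ < 1) :
    HasSum (fun n : ℕ => (∑ j, z j ^ n / n).re) (-Real.log ‖∏ j, (1 - z j)‖) := by
  have hne : ∀ j ∈ univ, ‖1 - z j‖ ≠ 0 := fun j _ => by
    rw [norm_ne_zero_iff, sub_ne_zero]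
    rintro h
    simpa [← h] using hz j
  have hlog := Complex.hasSum_re
    (hasSum_sum fun j (_ : j ∈ univ) => Complex.hasSum_taylorSeries_neg_log (hz j))
  simpa only [Complex.re_sum, Complex.neg_re, Complex.log_re, sum_neg_distrib, norm_prod,
    Real.log_prod hne] using hlog

theorem abs_tsum_nat_add_le_of_abs_le_geometric_div {a : ℕ → ℝ} {C r : ℝ} (hC : 0 ≤ C)
    (hr₀ : 0 ≤ r) (hr : r < 1) (N : ℕ) (ha : ∀ n, N < n → |a n| ≤ C * r ^ n / n) :
    |∑' i, a (i + (N + 1))| ≤ C * r ^ (N + 1) / ((N + 1) * (1 - r)) := by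
  have hbound : ∀ i, |a (i + (N + 1))| ≤ C * r ^ (N + 1) / (N + 1) * r ^ i := fun i => by
    calc |a (i + (N + 1))| ≤ C * r ^ (i + (N + 1)) / (i + (N + 1) : ℕ) := ha _ (by omega)
      _ ≤ C * r ^ (i + (N + 1)) / (N + 1) := by
        gcongr
        push_cast
        linarith [(i.cast_nonneg : (0 : ℝ) ≤ i)]
      _ = C * r ^ (N + 1) / (N + 1) * r ^ i := by ring
  have hgeom := (summable_geometric_of_lt_one hr₀ hr).mul_left (C * r ^ (N + 1) / (N + 1))
  have habs : Summable fun i => |a (i + (N + 1))| :=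
    hgeom.of_nonneg_of_le (fun i => abs_nonneg _) hbound
  calc |∑' i, a (i + (N + 1))| ≤ ∑' i, |a (i + (N + 1))| := by
        simpa only [Real.norm_eq_abs] using
          norm_tsum_le_tsum_norm (f := fun i => a (i + (N + 1))) (by simpa only [Real.norm_eq_abs])
    _ ≤ ∑' i, C * r ^ (N + 1) / (N + 1) * r ^ i := habs.tsum_le_tsum hbound hgeom
    _ = C * r ^ (N + 1) / ((N + 1) * (1 - r)) := by
        rw [tsum_mul_left, tsum_geometric_of_lt_one hr₀ hr]
        field_simp [(sub_pos.2 hr).ne']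

theorem log_norm_prod_one_sub_le {ι : Type*} [Fintype ι] (z : ι → ℂ) {r : ℝ} (hr₀ : 0 ≤ r)
    (hr : r < 1) (hz : ∀ j, ‖z j‖ ≤ r) (N : ℕ) :
    Real.log ‖∏ j, (1 - z j)‖ ≤
      -∑ n ∈ Icc 1 N, (∑ j, z j ^ n / n).re + Fintype.card ι * r ^ (N + 1) / ((N + 1) * (1 - r)) := by
  set a : ℕ → ℝ := fun n => (∑ j, z j ^ n / n).re
  have hsum := hasSum_re_sum_pow_div_neg_log_norm_prod_one_sub z fun j => (hz j).trans_lt hr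
  have hterm : ∀ n, N < n → |a n| ≤ Fintype.card ι * r ^ n / n := fun n _ => by
    calc |a n| ≤ ‖∑ j, z j ^ n / n‖ := Complex.abs_re_le_norm _
      _ ≤ ∑ j, ‖z j ^ n / n‖ := norm_sum_le _ _
      _ ≤ ∑ _j : ι, r ^ n / n := sum_le_sum fun j _ => by
        rw [norm_div, norm_pow, Complex.norm_natCast]
        gcongr
        exact hz j
      _ = Fintype.card ι * r ^ n / n := by simp [mul_div_assoc]
  have htail := abs_tsum_nat_add_le_of_abs_le_geometric_div (Nat.cast_nonneg _) hr₀ hr N hterm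
  have hsplit := hsum.summable.sum_add_tsum_nat_add (N + 1)
  have hhead : ∑ n ∈ range (N + 1), a n = ∑ n ∈ Icc 1 N, a n := by
    rw [range_eq_Ico, sum_eq_sum_Ico_succ_bot (by omega : 0 < N + 1), zero_add,
      Ico_add_one_right_eq_Icc]
    simp [a]
  rw [hsum.tsum_eq, hhead] at hsplit
  linarith [neg_abs_le (∑' i, a (i + (N + 1)))]

theorem re_sum_pow_div_eq_of_pointCount_eq {ι : Type*} [Fintype ι] {q : ℕ} (hq : 0 < q) (ω : ι → ℂ)
    {n : ℕ} (hn : n ≠ 0) {Nn : ℝ}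
    (hNn : (Nn : ℂ) = (q : ℂ) ^ n + 1 - (Real.sqrt q : ℂ) ^ n * ∑ j, ω j ^ n) :
    (∑ j, (ω j * (Real.sqrt q : ℂ)⁻¹) ^ n / n).re =
      (1 + ((q : ℝ) ^ n)⁻¹) / n - Nn / (n * (q : ℝ) ^ n) := by
  have hs : (Real.sqrt q : ℂ) ^ n ≠ 0 := pow_ne_zero _ (by simpa using hq.ne')
  have hsq : (Real.sqrt q : ℂ) ^ n * (Real.sqrt q : ℂ) ^ n = (q : ℂ) ^ n := by
    rw [← mul_pow, ← Complex.ofReal_mul, Real.mul_self_sqrt q.cast_nonneg, Complex.ofReal_natCast]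
  have hpowerSum : ∑ j, ω j ^ n = ((q : ℂ) ^ n + 1 - Nn) / (Real.sqrt q : ℂ) ^ n := by
    rw [eq_div_iff hs, hNn]
    ring
  have key : ∑ j, (ω j * (Real.sqrt q : ℂ)⁻¹) ^ n / n =
      (((1 + ((q : ℝ) ^ n)⁻¹) / n - Nn / (n * (q : ℝ) ^ n) : ℝ) : ℂ) := by
    simp_rw [mul_pow, ← sum_div, ← sum_mul, hpowerSum, inv_pow]
    push_cast
    rw [← hsq]
    field_simp
  rw [key, Complex.ofReal_re]

theorem class_number_upper_bound_general (q g : ℕ) (hq : 2 ≤ q)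
    (ω : Fin (2 * g) → ℂ) (hω : ∀ j, ‖ω j‖ = 1)
    (NF : ℕ → ℝ)
    (hNF : ∀ f : ℕ, 1 ≤ f →
      (NF f : ℂ) = (q : ℂ) ^ f + 1 - (Real.sqrt q : ℂ) ^ f * ∑ j, ω j ^ f)
    (h : ℝ)
    (hh : (h : ℂ) = (q : ℂ) ^ g * ∏ j, (1 - ω j * (Real.sqrt q : ℂ)⁻¹))
    (N : ℕ) :
    h ≤ (q : ℝ) ^ g * Real.exp (∑ f ∈ Finset.Icc 1 N, NF f / ((f : ℝ) * (q : ℝ) ^ f) -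
        ∑ n ∈ Finset.Icc 1 N, (1 + ((q : ℝ) ^ n)⁻¹) / (n : ℝ) +
        2 * (g : ℝ) / ((Real.sqrt q - 1) * ((N : ℝ) + 1) * Real.sqrt q ^ N)) := by
  set s := Real.sqrt q
  set z : Fin (2 * g) → ℂ := fun j => ω j * (s : ℂ)⁻¹
  have hs : 1 < s := Real.lt_sqrt zero_le_one |>.2 (by norm_num; omega)
  have hz : ∀ j, ‖z j‖ ≤ s⁻¹ := fun j => by
    simp [z, hω, abs_of_pos (zero_lt_one.trans hs)]
  have hlog := log_norm_prod_one_sub_le z (by positivity) (inv_lt_one_of_one_lt₀ hs) hz N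
  have hhead : ∑ n ∈ Icc 1 N, (∑ j, z j ^ n / n).re =
      ∑ n ∈ Icc 1 N, (1 + ((q : ℝ) ^ n)⁻¹) / n - ∑ f ∈ Icc 1 N, NF f / (f * (q : ℝ) ^ f) := by
    rw [← sum_sub_distrib]
    refine sum_congr rfl fun n hn => ?_
    have hn1 := (mem_Icc.1 hn).1
    exact re_sum_pow_div_eq_of_pointCount_eq (by omega) ω (by omega) (hNF n hn1)
  have htail : (Fintype.card (Fin (2 * g)) : ℝ) * s⁻¹ ^ (N + 1) / ((N + 1) * (1 - s⁻¹)) =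
      2 * g / ((s - 1) * (N + 1) * s ^ N) := by
    have : s - 1 ≠ 0 := (sub_pos.2 hs).ne'
    rw [Fintype.card_fin, inv_pow]
    field_simp
    push_cast
    ring
  have hnorm : h ≤ (q : ℝ) ^ g * ‖∏ j, (1 - z j)‖ := by
    calc h ≤ ‖(h : ℂ)‖ := by rw [Complex.norm_real]; exact le_abs_self h
      _ = (q : ℝ) ^ g * ‖∏ j, (1 - z j)‖ := by simp [hh, z]
  calc h ≤ (q : ℝ) ^ g * ‖∏ j, (1 - z j)‖ := hnorm
    _ ≤ (q : ℝ) ^ g * Real.exp (Real.log ‖∏ j, (1 - z j)‖) := by gcongr; exact Real.le_exp_log _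
    _ ≤ _ := by gcongr; linarith

theorem class_number_upper_bound (q g : ℕ) (hq : 2 ≤ q) (hg : 1 ≤ g)
    (ω : Fin (2 * g) → ℂ) (hω : ∀ j, ‖ω j‖ = 1)
    (hconj : Multiset.map (starRingEnd ℂ) (List.ofFn ω : Multiset ℂ) = (List.ofFn ω : Multiset ℂ))
    (NF : ℕ → ℝ)
    (hNF : ∀ f : ℕ, 1 ≤ f →
      (NF f : ℂ) = (q : ℂ) ^ f + 1 - (Real.sqrt q : ℂ) ^ f * ∑ j, ω j ^ f)
    (h : ℝ)
    (hh : (h : ℂ) = (q : ℂ) ^ g * ∏ j, (1 - ω j * (Real.sqrt q : ℂ)⁻¹))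
    (N : ℕ) (hN : 1 ≤ N) :
    h ≤ (q : ℝ) ^ g * Real.exp (∑ f ∈ Finset.Icc 1 N, NF f / ((f : ℝ) * (q : ℝ) ^ f) -
        ∑ n ∈ Finset.Icc 1 N, (1 + ((q : ℝ) ^ n)⁻¹) / (n : ℝ) +
        2 * (g : ℝ) / ((Real.sqrt q - 1) * ((N : ℝ) + 1) * Real.sqrt q ^ N)) :=
  class_number_upper_bound_general q g hq ω hω NF hNF h hh N
end

section
/- For every integer N ≥ 1, one has ∑_{f=1}^{N} Φ_f·log(q^f/(q^f − 1)) − ∑_{n=1}^{N} N_n/(n·q^n) ≤ c₁(q)/(N·q^{N/2}) + c₂(q)·g/(N·q^{3N/4}), where c₁(q) = 2q(q+1)/(q−1)², c₂(q) = (2q/(q−1))·(√q/(√q − 1) + q^{3/2}/(q^{3/2} − 1)), and log denotes the natural logarithm. -/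
/-!
Expanding `log (q ^ f / (q ^ f - 1)) = ∑ₘ q ^ (-f m) / m` and regrouping the second sum
along `n = f m`, the difference becomes `∑ f, Φ f * t f`, where `t f` is the tail of that
series after `⌊N / f⌋` terms; each tail is at most
`f * q ^ (-f (⌊N / f⌋ + 1)) * q / ((q - 1) (N + 1))`. The Weil bound
`f Φ f ≤ N_f ≤ q ^ f + 1 + 2 g q ^ (f / 2)` together with
`f (⌊N / f⌋ + 1) ≥ max (N + 1) (2 f)` leaves two geometric sums, split at `f ≈ N / 2`.
All exponents that occur are multiples of `1 / 4`, so the estimates are carried out in powers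
of `u = q ^ (1 / 4)`.
-/

open Finset Real

lemma neg_log_one_sub_sub_sum_le {x : ℝ} (hx0 : 0 ≤ x) (hx1 : x < 1) (M : ℕ) :
    -log (1 - x) - ∑ m ∈ Icc 1 M, x ^ m / m ≤ x ^ (M + 1) / ((M + 1) * (1 - x)) := by
  have hseries := hasSum_pow_div_log_of_abs_lt_one (abs_lt.2 ⟨by linarith, hx1⟩)
  have htail := (hasSum_nat_add_iff' M).2 hseries
  have hgeom := (hasSum_geometric_of_lt_one hx0 hx1).mul_left (x ^ (M + 1) / (M + 1))
  have hpartial : ∑ m ∈ Icc 1 M, x ^ m / m = ∑ i ∈ range M, x ^ (i + 1) / (i + 1) := by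
    rw [← Ico_add_one_right_eq_Icc, sum_Ico_eq_sum_range]
    simp [add_comm]
  rw [hpartial]
  refine (hasSum_le (fun i => ?_) htail hgeom).trans_eq (by field_simp)
  rw [div_mul_eq_mul_div, ← pow_add, show M + 1 + i = i + M + 1 by ring]
  gcongr
  linarith [(i.cast_nonneg : (0 : ℝ) ≤ i)]

lemma log_div_sub_one_sub_sum_le {r : ℝ} (hr : 1 < r) {f : ℕ} (hf : 0 < f) (N : ℕ) :
    log (r ^ f / (r ^ f - 1)) - ∑ m ∈ Icc 1 (N / f), (r ^ f)⁻¹ ^ m / m ≤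
      f / r ^ (f * (N / f + 1)) * (r / ((r - 1) * (N + 1))) := by
  set M := N / f
  have hry : r ≤ r ^ f := le_self_pow₀ hr.le hf.ne'
  have hy : 1 < r ^ f := hr.trans_le hry
  have hlog : log (r ^ f / (r ^ f - 1)) = -log (1 - (r ^ f)⁻¹) := by
    rw [← log_inv]
    congr 1
    field_simp
  have hM : (N + 1 : ℝ) ≤ f * (M + 1) := by exact_mod_cast Nat.lt_mul_div_succ N hf
  have hgeom : (1 - (r ^ f)⁻¹)⁻¹ ≤ r / (r - 1) := by
    rw [show 1 - (r ^ f)⁻¹ = (r ^ f - 1) / r ^ f by field_simp, inv_div,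
      div_le_div_iff₀ (by linarith) (by linarith)]
    nlinarith
  rw [hlog]
  refine (neg_log_one_sub_sub_sum_le (by positivity) (inv_lt_one_of_one_lt₀ hy) M).trans ?_
  calc (r ^ f)⁻¹ ^ (M + 1) / ((M + 1) * (1 - (r ^ f)⁻¹))
      = 1 / r ^ (f * (M + 1)) * (M + 1 : ℝ)⁻¹ * (1 - (r ^ f)⁻¹)⁻¹ := by
        rw [pow_mul, inv_pow]; field_simp
    _ ≤ 1 / r ^ (f * (M + 1)) * (f / (N + 1)) * (r / (r - 1)) := by
        gcongr
        · exact inv_nonneg.2 (sub_nonneg.2 (inv_le_one_of_one_le₀ hy.le))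
        · rw [inv_eq_one_div, div_le_div_iff₀ (by positivity) (by positivity)]
          linarith
    _ = f / r ^ (f * (M + 1)) * (r / ((r - 1) * (N + 1))) := by field_simp

lemma sum_Icc_sum_divisors_eq {M : Type*} [AddCommMonoid M] (N : ℕ) (F : ℕ → ℕ → M) :
    ∑ n ∈ Icc 1 N, ∑ d ∈ n.divisors, F d n =
      ∑ d ∈ Icc 1 N, ∑ m ∈ Icc 1 (N / d), F d (d * m) := by
  rw [sum_comm' (t' := Icc 1 N) (s' := fun d => (Icc 1 (N / d)).image (d * ·))]
  · refine sum_congr rfl fun d hd => sum_image fun m _ m' _ h => ?_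
    exact Nat.eq_of_mul_eq_mul_left (mem_Icc.1 hd).1 h
  · intro n d
    simp only [mem_Icc, Nat.mem_divisors, mem_image]
    constructor
    · rintro ⟨⟨hn1, hnN⟩, ⟨m, rfl⟩, -⟩
      have hd : 0 < d := Nat.pos_of_mul_pos_right hn1
      have hm : 0 < m := Nat.pos_of_mul_pos_left hn1
      have hmN : m ≤ N / d := (Nat.le_div_iff_mul_le hd).2 (by linarith [Nat.mul_comm d m])
      exact ⟨⟨m, ⟨hm, hmN⟩, rfl⟩, hd, by nlinarith⟩
    · rintro ⟨⟨m, ⟨hm1, hmN⟩, rfl⟩, hd1, hdN⟩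
      have := (Nat.le_div_iff_mul_le hd1).1 hmN
      exact ⟨⟨Nat.mul_pos hd1 hm1, by linarith [Nat.mul_comm d m]⟩, dvd_mul_right d m,
        by positivity⟩

lemma sum_sum_divisors_mul_div_eq (Φ : ℕ → ℝ) (r : ℝ) (N : ℕ) :
    ∑ n ∈ Icc 1 N, (∑ d ∈ n.divisors, d * Φ d) / (n * r ^ n) =
      ∑ f ∈ Icc 1 N, Φ f * ∑ m ∈ Icc 1 (N / f), (r ^ f)⁻¹ ^ m / m := by
  simp_rw [sum_div]
  rw [sum_Icc_sum_divisors_eq]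
  refine sum_congr rfl fun f hf => ?_
  rw [mul_sum]
  refine sum_congr rfl fun m _ => ?_
  have hf0 : (f : ℝ) ≠ 0 := Nat.cast_ne_zero.2 (by simp at hf; omega)
  push_cast
  rw [pow_mul, inv_pow]
  field_simp

lemma le_add_mul_card_of_ofReal_eq {ι : Type*} [Fintype ι] {ω : ι → ℂ}
    (hω : ∀ j, ‖ω j‖ = 1) {f : ℕ} {x a s : ℝ} (hs : 0 ≤ s)
    (h : (x : ℂ) = a - s * ∑ j, ω j ^ f) :
    x ≤ a + s * Fintype.card ι := by
  have hre : x = a - s * (∑ j, ω j ^ f).re := by simpa using congrArg Complex.re h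
  have hnorm : ‖∑ j, ω j ^ f‖ ≤ Fintype.card ι := (norm_sum_le _ _).trans (by simp [hω])
  have hneg := (neg_le_abs _).trans ((Complex.abs_re_le_norm (∑ j, ω j ^ f)).trans hnorm)
  rw [hre]
  nlinarith

lemma sum_Icc_one_pow_le {x : ℝ} (hx : 1 < x) (K : ℕ) :
    ∑ f ∈ Icc 1 K, x ^ f ≤ x ^ (K + 1) / (x - 1) := by
  rw [← Ico_add_one_right_eq_Icc, geom_sum_Ico hx.ne' (by omega)]
  gcongr
  linarith

lemma sum_Icc_inv_pow_le {x : ℝ} (hx : 1 < x) (K N : ℕ) :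
    ∑ f ∈ Icc (K + 1) N, x⁻¹ ^ f ≤ x⁻¹ ^ K / (x - 1) := by
  rw [← Ico_add_one_right_eq_Icc]
  refine (geom_sum_Ico_le_of_lt_one (by positivity) (inv_lt_one_of_one_lt₀ hx)).trans_eq ?_
  rw [show 1 - x⁻¹ = (x - 1) / x by field_simp, pow_succ]
  field_simp

-- The two terms bound the parts `f ≤ (N + 1) / 2` and `f > (N + 1) / 2` of the sum, using
-- `N + 1 ≤ e f` and `2 * f ≤ e f` respectively.
lemma sum_pow_div_pow_le {u : ℝ} (hu : 1 < u) {k m c c' d N : ℕ} (hk : 0 < k)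
    (hkm : k < 2 * m) (e : ℕ → ℕ) (he : ∀ f ∈ Icc 1 N, N + 1 ≤ e f ∧ 2 * f ≤ e f)
    (hhead : k * ((N + 1) / 2 + 1) + c ≤ m * (N + 1) + d)
    (htail : c' ≤ (2 * m - k) * ((N + 1) / 2)) :
    ∑ f ∈ Icc 1 N, u ^ (k * f) / u ^ (m * e f) ≤
      u ^ d / (u ^ c * (u ^ k - 1)) + 1 / (u ^ c' * (u ^ (2 * m - k) - 1)) := by
  set K := (N + 1) / 2
  have hpow : ∀ {a b : ℕ}, a ≤ b → u ^ a ≤ u ^ b := fun h => pow_le_pow_right₀ hu.le h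
  have huk : 1 < u ^ k := one_lt_pow₀ hu hk.ne'
  have hum : 1 < u ^ (2 * m - k) := one_lt_pow₀ hu (by omega)
  have huk' : 0 < u ^ k - 1 := by linarith
  have hum' : 0 < u ^ (2 * m - k) - 1 := by linarith
  rw [← Ico_add_one_right_eq_Icc, ← sum_Ico_consecutive _ (by omega : 1 ≤ K + 1) (by omega),
    Ico_add_one_right_eq_Icc, Ico_add_one_right_eq_Icc]
  gcongr ?_ + ?_
  · calc ∑ f ∈ Icc 1 K, u ^ (k * f) / u ^ (m * e f)
        ≤ ∑ f ∈ Icc 1 K, (u ^ k) ^ f / u ^ (m * (N + 1)) := by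
          refine sum_le_sum fun f hf => ?_
          rw [← pow_mul]
          exact div_le_div_of_nonneg_left (by positivity) (by positivity)
            (hpow (Nat.mul_le_mul_left m (he f (by simp at hf ⊢; omega)).1))
      _ ≤ (u ^ k) ^ (K + 1) / (u ^ k - 1) / u ^ (m * (N + 1)) := by
          rw [← sum_div]
          gcongr
          exact sum_Icc_one_pow_le huk K
      _ ≤ u ^ d / (u ^ c * (u ^ k - 1)) := by
          rw [div_div, div_le_div_iff₀ (mul_pos huk' (by positivity))
            (mul_pos (by positivity) huk'), ← pow_mul]
          calc u ^ (k * (K + 1)) * (u ^ c * (u ^ k - 1))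
              = u ^ (k * (K + 1) + c) * (u ^ k - 1) := by ring
            _ ≤ u ^ (m * (N + 1) + d) * (u ^ k - 1) :=
                mul_le_mul_of_nonneg_right (hpow hhead) huk'.le
            _ = u ^ d * ((u ^ k - 1) * u ^ (m * (N + 1))) := by ring
  · calc ∑ f ∈ Icc (K + 1) N, u ^ (k * f) / u ^ (m * e f)
        ≤ ∑ f ∈ Icc (K + 1) N, (u ^ (2 * m - k))⁻¹ ^ f := by
          refine sum_le_sum fun f hf => ?_
          have h2f := (he f (by simp at hf ⊢; omega)).2
          have hexp : k * f + (2 * m - k) * f = m * (2 * f) := by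
            rw [← add_mul, Nat.add_sub_cancel' hkm.le]
            ring
          calc u ^ (k * f) / u ^ (m * e f) ≤ u ^ (k * f) / u ^ (k * f + (2 * m - k) * f) :=
                div_le_div_of_nonneg_left (by positivity) (by positivity)
                  (hpow (hexp ▸ Nat.mul_le_mul_left m h2f))
            _ = (u ^ (2 * m - k))⁻¹ ^ f := by
                rw [pow_add, pow_mul u (2 * m - k) f, inv_pow]
                field_simp
      _ ≤ (u ^ (2 * m - k))⁻¹ ^ K / (u ^ (2 * m - k) - 1) := sum_Icc_inv_pow_le hum K N
      _ ≤ 1 / (u ^ c' * (u ^ (2 * m - k) - 1)) := by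
          rw [inv_pow, ← pow_mul, ← one_div, div_div]
          exact div_le_div_of_nonneg_left zero_le_one (mul_pos (by positivity) hum')
            (mul_le_mul_of_nonneg_right (hpow htail) hum'.le)

lemma sum_add_one_add_mul_div_pow_le {u : ℝ} (hu : 1 < u) {g : ℝ} (hg : 0 ≤ g) (N : ℕ) :
    ∑ f ∈ Icc 1 N, ((u ^ 4) ^ f + 1 + 2 * g * (u ^ 2) ^ f) / (u ^ 4) ^ (f * (N / f + 1)) ≤
      (1 + (u ^ 4)⁻¹) * ((u ^ 2 + 1) / ((u ^ 2) ^ N * (u ^ 4 - 1))) +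
        2 * g * (1 / ((u ^ 3) ^ N * (u ^ 2 - 1)) + 1 / ((u ^ 3) ^ N * (u ^ 6 - 1))) := by
  have he : ∀ f ∈ Icc 1 N, N + 1 ≤ f * (N / f + 1) ∧ 2 * f ≤ f * (N / f + 1) := by
    intro f hf
    obtain ⟨hf1, hfN⟩ := mem_Icc.1 hf
    refine ⟨Nat.lt_mul_div_succ N hf1, ?_⟩
    have : 1 ≤ N / f := (Nat.one_le_div_iff hf1).2 hfN
    rw [mul_comm 2]
    exact Nat.mul_le_mul_left f (by omega)
  have h4 := sum_pow_div_pow_le hu (k := 4) (m := 4) (c := 2 * N) (c' := 2 * N) (d := 2)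
    (by norm_num) (by norm_num) _ he (by omega) (by omega)
  have h2 := sum_pow_div_pow_le hu (k := 2) (m := 4) (c := 3 * N) (c' := 3 * N) (d := 0)
    (by norm_num) (by norm_num) _ he (by omega) (by omega)
  have h1 : ∀ f ∈ Icc 1 N, (u ^ 4) ^ f + 1 ≤ (1 + (u ^ 4)⁻¹) * (u ^ 4) ^ f := by
    intro f hf
    have : 1 ≤ (u ^ 4)⁻¹ * (u ^ 4) ^ f := (one_le_inv_mul₀ (by positivity)).2
      (le_self_pow₀ (one_le_pow₀ hu.le) (by simp at hf; omega))
    linarith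
  simp only [pow_mul u, Nat.reduceMul, Nat.reduceSub, pow_zero] at h4 h2
  calc ∑ f ∈ Icc 1 N, ((u ^ 4) ^ f + 1 + 2 * g * (u ^ 2) ^ f) / (u ^ 4) ^ (f * (N / f + 1))
      ≤ ∑ f ∈ Icc 1 N, ((1 + (u ^ 4)⁻¹) * ((u ^ 4) ^ f / (u ^ 4) ^ (f * (N / f + 1))) +
          2 * g * ((u ^ 2) ^ f / (u ^ 4) ^ (f * (N / f + 1)))) := by
        refine sum_le_sum fun f hf => ?_
        rw [← mul_div_assoc, ← mul_div_assoc, ← add_div]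
        gcongr
        exact h1 f hf
    _ = (1 + (u ^ 4)⁻¹) * ∑ f ∈ Icc 1 N, (u ^ 4) ^ f / (u ^ 4) ^ (f * (N / f + 1)) +
          2 * g * ∑ f ∈ Icc 1 N, (u ^ 2) ^ f / (u ^ 4) ^ (f * (N / f + 1)) := by
        rw [sum_add_distrib, mul_sum, mul_sum]
    _ ≤ (1 + (u ^ 4)⁻¹) *
            (u ^ 2 / ((u ^ 2) ^ N * (u ^ 4 - 1)) + 1 / ((u ^ 2) ^ N * (u ^ 4 - 1))) +
          2 * g * (1 / ((u ^ 3) ^ N * (u ^ 2 - 1)) + 1 / ((u ^ 3) ^ N * (u ^ 6 - 1))) := by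
        gcongr
    _ = _ := by ring

lemma mul_div_pow_four_sub_one_le {u : ℝ} (hu : 1 < u) {N : ℕ} (hN : 0 < N) {g T : ℝ}
    (hg : 0 ≤ g)
    (hT : T ≤ (1 + (u ^ 4)⁻¹) * ((u ^ 2 + 1) / ((u ^ 2) ^ N * (u ^ 4 - 1))) +
      2 * g * (1 / ((u ^ 3) ^ N * (u ^ 2 - 1)) + 1 / ((u ^ 3) ^ N * (u ^ 6 - 1)))) :
    T * (u ^ 4 / ((u ^ 4 - 1) * (N + 1))) ≤
      2 * u ^ 4 * (u ^ 4 + 1) / (u ^ 4 - 1) ^ 2 / (N * (u ^ 2) ^ N) +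
        2 * u ^ 4 / (u ^ 4 - 1) * (u ^ 2 / (u ^ 2 - 1) + u ^ 6 / (u ^ 6 - 1)) * g /
          (N * (u ^ 3) ^ N) := by
  have h2 : 1 < u ^ 2 := one_lt_pow₀ hu (by norm_num)
  have h4 : 1 < u ^ 4 := one_lt_pow₀ hu (by norm_num)
  have h6 : 1 < u ^ 6 := one_lt_pow₀ hu (by norm_num)
  have h4' : 0 < u ^ 4 - 1 := by linarith
  have h2' : 0 < u ^ 2 - 1 := by linarith
  have h6' : 0 < u ^ 6 - 1 := by linarith
  have h24 : u ^ 2 + 1 ≤ 2 * u ^ 4 := by nlinarith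
  have hN' : (N : ℝ) ≤ N + 1 := by linarith
  have hNpos : (0 : ℝ) < N := by exact_mod_cast hN
  refine (mul_le_mul_of_nonneg_right hT (by positivity)).trans ?_
  rw [add_mul]
  gcongr ?_ + ?_
  · calc _ = (u ^ 4 + 1) * (u ^ 2 + 1) / ((u ^ 4 - 1) ^ 2 * ((N + 1) * (u ^ 2) ^ N)) := by
          field_simp
      _ ≤ (u ^ 4 + 1) * (2 * u ^ 4) / ((u ^ 4 - 1) ^ 2 * (N * (u ^ 2) ^ N)) := by
          gcongr
      _ = _ := by rw [div_div]; ring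
  · calc _ = 2 * u ^ 4 / (u ^ 4 - 1) * (1 / (u ^ 2 - 1) + 1 / (u ^ 6 - 1)) * g /
            ((N + 1) * (u ^ 3) ^ N) := by
          field_simp
      _ ≤ _ := by
          gcongr

lemma exists_one_lt_pow_four_eq {r : ℝ} (hr : 1 < r) :
    ∃ u : ℝ, 1 < u ∧ r = u ^ 4 ∧ √r = u ^ 2 ∧ r ^ (3 / 2 : ℝ) = u ^ 6 ∧
      r ^ (3 / 4 : ℝ) = u ^ 3 := by
  have hpow : ∀ n : ℕ, (r ^ (1 / 4 : ℝ)) ^ n = r ^ ((n : ℝ) / 4) := fun n => by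
    rw [← rpow_natCast, ← rpow_mul (by linarith)]
    ring_nf
  refine ⟨r ^ (1 / 4 : ℝ), one_lt_rpow hr (by norm_num), ?_, ?_, ?_, ?_⟩ <;>
    rw [hpow] <;> norm_num [sqrt_eq_rpow]

theorem eps0_lower_bound_general (q g : ℕ) (hq : 2 ≤ q)
    (ω : Fin (2 * g) → ℂ) (hω : ∀ j, ‖ω j‖ = 1)
    (NF : ℕ → ℝ)
    (hNF : ∀ f : ℕ, 1 ≤ f →
      (NF f : ℂ) = (q : ℂ) ^ f + 1 - (Real.sqrt q : ℂ) ^ f * ∑ j, ω j ^ f)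
    (Φ : ℕ → ℕ)
    (hΦ : ∀ n : ℕ, 1 ≤ n → (∑ d ∈ n.divisors, (d * Φ d : ℝ)) = NF n)
    (N : ℕ) (hN : 1 ≤ N) :
    ∑ f ∈ Finset.Icc 1 N, (Φ f : ℝ) * Real.log ((q : ℝ) ^ f / ((q : ℝ) ^ f - 1)) -
        ∑ n ∈ Finset.Icc 1 N, NF n / ((n : ℝ) * (q : ℝ) ^ n) ≤
      (2 * q * (q + 1) / ((q : ℝ) - 1) ^ 2) / ((N : ℝ) * Real.sqrt q ^ N) +
        (2 * q / ((q : ℝ) - 1) *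
            (Real.sqrt q / (Real.sqrt q - 1) +
              (q : ℝ) ^ ((3 : ℝ) / 2) / ((q : ℝ) ^ ((3 : ℝ) / 2) - 1))) * (g : ℝ) /
          ((N : ℝ) * ((q : ℝ) ^ ((3 : ℝ) / 4)) ^ N) := by
  have hq1 : 1 < (q : ℝ) := by exact_mod_cast hq
  have hpoint : ∀ f ∈ Icc 1 N,
      (f : ℝ) * Φ f ≤ (q : ℝ) ^ f + 1 + 2 * g * √(q : ℝ) ^ f := by
    intro f hf
    have hf1 := (mem_Icc.1 hf).1
    have hweil := le_add_mul_card_of_ofReal_eq hω (x := NF f) (a := (q : ℝ) ^ f + 1)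
      (s := √(q : ℝ) ^ f) (by positivity) (by rw [hNF f hf1]; push_cast; ring)
    rw [Fintype.card_fin] at hweil
    push_cast at hweil
    calc (f : ℝ) * Φ f ≤ NF f := hΦ f hf1 ▸
          single_le_sum (f := fun d : ℕ => (d : ℝ) * Φ d) (fun d _ => by positivity)
            (Nat.mem_divisors_self f (by omega))
      _ ≤ _ := by linarith
  set r : ℝ := (q : ℝ)
  obtain ⟨u, hu, hru, hsqrt, h32, h34⟩ := exists_one_lt_pow_four_eq hq1
  have hNF_sum : ∑ n ∈ Icc 1 N, NF n / (n * r ^ n) =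
      ∑ n ∈ Icc 1 N, (∑ d ∈ n.divisors, d * (Φ d : ℝ)) / (n * r ^ n) :=
    sum_congr rfl fun n hn => by rw [hΦ n (mem_Icc.1 hn).1]
  calc _ = ∑ f ∈ Icc 1 N, (Φ f : ℝ) *
          (log (r ^ f / (r ^ f - 1)) - ∑ m ∈ Icc 1 (N / f), (r ^ f)⁻¹ ^ m / m) := by
        rw [hNF_sum, sum_sum_divisors_mul_div_eq, ← sum_sub_distrib]
        simp only [mul_sub]
    _ ≤ ∑ f ∈ Icc 1 N, (Φ f : ℝ) *
          (f / r ^ (f * (N / f + 1)) * (r / ((r - 1) * (N + 1)))) := by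
        gcongr with f hf
        exact log_div_sub_one_sub_sum_le hq1 (mem_Icc.1 hf).1 N
    _ = (∑ f ∈ Icc 1 N, (f : ℝ) * Φ f / r ^ (f * (N / f + 1))) *
          (r / ((r - 1) * (N + 1))) := by
        rw [sum_mul]
        exact sum_congr rfl fun f _ => by ring
    _ ≤ (∑ f ∈ Icc 1 N, (r ^ f + 1 + 2 * g * √r ^ f) / r ^ (f * (N / f + 1))) *
          (r / ((r - 1) * (N + 1))) := by
        gcongr with f hf
        exact hpoint f hf
    _ ≤ _ := by
        rw [hsqrt, h32, h34, hru]
        exact mul_div_pow_four_sub_one_le hu hN (by positivity)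
          (sum_add_one_add_mul_div_pow_le hu (by positivity) N)

theorem eps0_lower_bound (q g : ℕ) (hq : 2 ≤ q) (hg : 1 ≤ g)
    (ω : Fin (2 * g) → ℂ) (hω : ∀ j, ‖ω j‖ = 1)
    (hconj : Multiset.map (starRingEnd ℂ) (List.ofFn ω : Multiset ℂ) = (List.ofFn ω : Multiset ℂ))
    (NF : ℕ → ℝ)
    (hNF : ∀ f : ℕ, 1 ≤ f →
      (NF f : ℂ) = (q : ℂ) ^ f + 1 - (Real.sqrt q : ℂ) ^ f * ∑ j, ω j ^ f)
    (Φ : ℕ → ℕ)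
    (hΦ : ∀ n : ℕ, 1 ≤ n → (∑ d ∈ n.divisors, (d * Φ d : ℝ)) = NF n)
    (N : ℕ) (hN : 1 ≤ N) :
    ∑ f ∈ Finset.Icc 1 N, (Φ f : ℝ) * Real.log ((q : ℝ) ^ f / ((q : ℝ) ^ f - 1)) -
        ∑ n ∈ Finset.Icc 1 N, NF n / ((n : ℝ) * (q : ℝ) ^ n) ≤
      (2 * q * (q + 1) / ((q : ℝ) - 1) ^ 2) / ((N : ℝ) * Real.sqrt q ^ N) +
        (2 * q / ((q : ℝ) - 1) *
            (Real.sqrt q / (Real.sqrt q - 1) +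
              (q : ℝ) ^ ((3 : ℝ) / 2) / ((q : ℝ) ^ ((3 : ℝ) / 2) - 1))) * (g : ℝ) /
          ((N : ℝ) * ((q : ℝ) ^ ((3 : ℝ) / 4)) ^ N) :=
  eps0_lower_bound_general q g hq ω hω NF hNF Φ hΦ N hN
end

section
/- Suppose that for every index i ∈ ℕ we are given data as in the context, with the same q but genus g_i, normalized inverse roots ω^{(i)}_1, …, ω^{(i)}_{2g_i}, place counts Φ^{(i)}_1, Φ^{(i)}_2, …, and class number h_i, such that g_i → ∞ as i → ∞, and such that for every integer r ≥ 1 the limit φ_r = lim_{i→∞} Φ^{(i)}_r / g_i exists (an asymptotically exact family of curves). Then the series ∑_{r=1}^{∞} φ_r·log(q^r/(q^r − 1)) converges and lim_{i→∞} (log h_i)/g_i = log q + ∑_{r=1}^{∞} φ_r·log(q^r/(q^r − 1)), where log denotes the natural logarithm (the generalized Brauer–Siegel theorem for function fields). -/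
/-!
Taking logarithms in `h = q ^ g * ∏ j, (1 - ω j / √q)` and expanding each `-log (1 - z)` as a
power series gives `log h - g log q = ∑ₙ (Nₙ - qⁿ - 1) / (n qⁿ)`. The Weil bound
`|Nₙ - qⁿ - 1| ≤ 2 g √qⁿ` dominates the `n`-th term divided by `g` by `2 √q⁻ⁿ`, so by Tannery's
theorem `log hᵢ / gᵢ` tends to `log q + ∑ₙ νₙ / (n qⁿ)` with `νₙ = ∑_{d ∣ n} d φ_d`. Writing
`n = d m` and summing over `m` first, which is legitimate since all terms are nonnegative, turns
this series into `∑_d φ_d log (q^d / (q^d - 1))`.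
-/

open Filter Topology

theorem Complex.hasSum_re_sum_pow_div {ι : Type*} [Fintype ι] {z : ι → ℂ}
    (hz : ∀ j, ‖z j‖ < 1) :
    HasSum (fun n : ℕ => (∑ j, z j ^ n).re / n) (-Real.log ‖∏ j, (1 - z j)‖) := by
  have hne : ∀ j, ‖1 - z j‖ ≠ 0 := fun j =>
    norm_ne_zero_iff.2 fun h0 => by simpa [← sub_eq_zero.1 h0] using hz j
  have H := Complex.hasSum_re (hasSum_sum fun j (_ : j ∈ Finset.univ) =>
    hasSum_taylorSeries_neg_log (hz j))
  simp only [← Finset.sum_div, Complex.div_natCast_re] at H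
  convert H using 1
  simp [Complex.re_sum, Complex.log_re, norm_prod, Real.log_prod fun j _ => hne j]

theorem Real.hasSum_pow_div_neg_log {x : ℝ} (hx : |x| < 1) :
    HasSum (fun m : ℕ => x ^ m / m) (-Real.log (1 - x)) :=
  (hasSum_nat_add_iff' 1).mp <| by simpa using Real.hasSum_pow_div_log_of_abs_lt_one hx

section ClassNumber

variable {ι : Type*} [Fintype ι] {q : ℝ} {ω : ι → ℂ} {N : ℕ → ℝ}

theorem abs_sub_pow_sub_one_le (hω : ∀ j, ‖ω j‖ = 1) {n : ℕ}
    (hN : (N n : ℂ) = (q : ℂ) ^ n + 1 - (√q : ℂ) ^ n * ∑ j, ω j ^ n) :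
    |N n - q ^ n - 1| ≤ Fintype.card ι * √q ^ n := by
  have hsum : ‖∑ j, ω j ^ n‖ ≤ Fintype.card ι := by
    simpa [hω] using norm_sum_le Finset.univ fun j => ω j ^ n
  have : ((N n - q ^ n - 1 : ℝ) : ℂ) = -((√q : ℂ) ^ n * ∑ j, ω j ^ n) := by
    push_cast
    linear_combination hN
  rw [← Real.norm_eq_abs, ← Complex.norm_real, this, norm_neg, norm_mul, norm_pow,
    Complex.norm_real, Real.norm_of_nonneg (Real.sqrt_nonneg q), mul_comm]
  gcongr

theorem sum_mul_inv_sqrt_pow_eq (hq : 0 < q) {n : ℕ}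
    (hN : (N n : ℂ) = (q : ℂ) ^ n + 1 - (√q : ℂ) ^ n * ∑ j, ω j ^ n) :
    ∑ j, (ω j * (√q : ℂ)⁻¹) ^ n = (((q ^ n + 1 - N n) / q ^ n : ℝ) : ℂ) := by
  have hsn : (√q : ℂ) ^ n ≠ 0 := pow_ne_zero _ (by exact_mod_cast (Real.sqrt_pos.2 hq).ne')
  have hsq : (√q : ℂ) ^ n * (√q : ℂ) ^ n = (q : ℂ) ^ n := by
    rw [← mul_pow, ← Complex.ofReal_mul, Real.mul_self_sqrt hq.le]
  calc ∑ j, (ω j * (√q : ℂ)⁻¹) ^ n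
      = (√q : ℂ) ^ n * (∑ j, ω j ^ n) / ((√q : ℂ) ^ n * (√q : ℂ) ^ n) := by
        simp only [mul_pow, ← Finset.sum_mul, inv_pow]
        field_simp
    _ = _ := by
        rw [hsq]
        push_cast
        rw [hN]
        ring

theorem hasSum_log_classNumber (hq : 1 < q) (hω : ∀ j, ‖ω j‖ = 1)
    (hN : ∀ n, 1 ≤ n → (N n : ℂ) = (q : ℂ) ^ n + 1 - (√q : ℂ) ^ n * ∑ j, ω j ^ n)
    {g : ℕ} {h : ℝ} (hh : (h : ℂ) = (q : ℂ) ^ g * ∏ j, (1 - ω j * (√q : ℂ)⁻¹)) :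
    HasSum (fun n : ℕ => (N n - q ^ n - 1) / (n * q ^ n)) (Real.log h - g * Real.log q) := by
  have hq0 : 0 < q := by linarith
  have hz : ∀ j, ‖ω j * (√q : ℂ)⁻¹‖ < 1 := fun j => by
    rw [norm_mul, hω, one_mul, norm_inv, Complex.norm_real, Real.norm_of_nonneg (by positivity)]
    exact inv_lt_one_of_one_lt₀ (Real.lt_sqrt_of_sq_lt (by simpa using hq))
  have hprod : ∏ j, (1 - ω j * (√q : ℂ)⁻¹) ≠ 0 := Finset.prod_ne_zero_iff.2 fun j _ h0 => by
    simpa [← sub_eq_zero.1 h0] using hz j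
  have hlog : Real.log h = g * Real.log q + Real.log ‖∏ j, (1 - ω j * (√q : ℂ)⁻¹)‖ := by
    rw [← Real.log_abs, ← Real.norm_eq_abs, ← Complex.norm_real, hh, norm_mul, norm_pow,
      Complex.norm_real, Real.norm_of_nonneg hq0.le,
      Real.log_mul (by positivity) (norm_ne_zero_iff.2 hprod), Real.log_pow]
  have hterm : ∀ n : ℕ, (N n - q ^ n - 1) / (n * q ^ n) =
      -((∑ j, (ω j * (√q : ℂ)⁻¹) ^ n).re / n) := fun n => by
    rcases Nat.eq_zero_or_pos n with rfl | hn
    · simp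
    rw [sum_mul_inv_sqrt_pow_eq hq0 (hN n hn), Complex.ofReal_re]
    field_simp
    ring
  rw [show Real.log h - g * Real.log q = - -Real.log ‖∏ j, (1 - ω j * (√q : ℂ)⁻¹)‖ by
    rw [hlog]; ring]
  exact (Complex.hasSum_re_sum_pow_div hz).neg.congr_fun hterm

end ClassNumber

theorem tendsto_tsum_div_of_abs_sub_le {q C : ℝ} (hq : 1 < q) {g : ℕ → ℝ}
    (hg : Tendsto g atTop atTop) {N : ℕ → ℕ → ℝ} {ν : ℕ → ℝ}
    (hbound : ∀ i n, 1 ≤ n → |N i n - q ^ n - 1| ≤ C * g i * √q ^ n)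
    (hlim : ∀ n, 1 ≤ n → Tendsto (fun i => N i n / g i) atTop (𝓝 (ν n))) :
    Summable (fun n : ℕ => ν n / (n * q ^ n)) ∧
      Tendsto (fun i => ∑' n : ℕ, (N i n - q ^ n - 1) / (n * q ^ n) / g i) atTop
        (𝓝 (∑' n : ℕ, ν n / (n * q ^ n))) := by
  have hq0 : 0 < q := by linarith
  have hterm : ∀ n : ℕ, Tendsto (fun i => (N i n - q ^ n - 1) / (n * q ^ n) / g i) atTop
      (𝓝 (ν n / (n * q ^ n))) := by
    intro n
    rcases Nat.eq_zero_or_pos n with rfl | hn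
    · simp
    have hconst : Tendsto (fun i => (q ^ n + 1) / g i) atTop (𝓝 0) := hg.const_div_atTop _
    convert ((hlim n hn).sub hconst).div_const (n * q ^ n) using 2 with i
    · ring
    · rw [sub_zero]
  have hdom : ∀ᶠ i in atTop, ∀ n : ℕ,
      ‖(N i n - q ^ n - 1) / (n * q ^ n) / g i‖ ≤ |C| * (√q)⁻¹ ^ n := by
    filter_upwards [hg.eventually_gt_atTop 0] with i hi n
    rcases Nat.eq_zero_or_pos n with rfl | hn
    · simp
    have hn1 : (1 : ℝ) ≤ n := by exact_mod_cast hn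
    calc ‖(N i n - q ^ n - 1) / (n * q ^ n) / g i‖
        = |N i n - q ^ n - 1| / (n * q ^ n * g i) := by
          rw [Real.norm_eq_abs, div_div, abs_div, abs_of_pos (a := n * q ^ n * g i) (by positivity)]
      _ ≤ C * g i * √q ^ n / (n * q ^ n * g i) := by
          gcongr
          exact hbound i n hn
      _ = C / n * (√q)⁻¹ ^ n := by
          have hqn : q ^ n = √q ^ n * √q ^ n := by rw [← mul_pow, Real.mul_self_sqrt hq0.le]
          rw [hqn, inv_pow]
          field_simp
      _ ≤ |C| * (√q)⁻¹ ^ n := by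
          gcongr
          exact (div_le_self (abs_nonneg C) hn1).trans' (by gcongr; exact le_abs_self C)
  have hbsum : Summable fun n : ℕ => |C| * (√q)⁻¹ ^ n :=
    (summable_geometric_of_lt_one (by positivity)
      (inv_lt_one_of_one_lt₀ (Real.lt_sqrt_of_sq_lt (by simpa using hq)))).mul_left _
  refine ⟨hbsum.of_norm_bounded fun n => ?_,
    tendsto_tsum_of_dominated_convergence hbsum hterm hdom⟩
  exact le_of_tendsto (tendsto_norm.comp (hterm n)) (hdom.mono fun i hi => hi n)

theorem Nat.preimage_mul_singleton {n : ℕ} (hn : n ≠ 0) :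
    (fun p : ℕ × ℕ => p.1 * p.2) ⁻¹' {n} = n.divisorsAntidiagonal := by
  ext
  simp [hn]

theorem tsum_preimage_mul_eq {b F : ℕ → ℝ} (hF : F 0 = 0) (n : ℕ) :
    ∑' p : (fun p : ℕ × ℕ => p.1 * p.2) ⁻¹' {n}, b p.1.1 * F (p.1.1 * p.1.2) =
      (∑ d ∈ n.divisors, b d) * F n := by
  calc ∑' p : (fun p : ℕ × ℕ => p.1 * p.2) ⁻¹' {n}, b p.1.1 * F (p.1.1 * p.1.2)
      = (∑' p : (fun p : ℕ × ℕ => p.1 * p.2) ⁻¹' {n}, b p.1.1) * F n := by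
        rw [← tsum_mul_right]
        exact tsum_congr fun p => by rw [show p.1.1 * p.1.2 = n from p.2]
    _ = (∑ d ∈ n.divisors, b d) * F n := by
      rcases eq_or_ne n 0 with rfl | hn
      · simp [hF]
      rw [Nat.preimage_mul_singleton hn,
        Finset.tsum_subtype' n.divisorsAntidiagonal fun p => b p.1,
        Nat.sum_divisorsAntidiagonal fun d _ => b d]

theorem hasSum_mul_mul_of_hasSum_divisors_sum {b F : ℕ → ℝ} (hb : 0 ≤ b) (hF : 0 ≤ F)
    (hF0 : F 0 = 0) {a : ℝ} (ha : HasSum (fun n => (∑ d ∈ n.divisors, b d) * F n) a) :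
    HasSum (fun p : ℕ × ℕ => b p.1 * F (p.1 * p.2)) a := by
  have hsum : Summable fun p : ℕ × ℕ => b p.1 * F (p.1 * p.2) := by
    refine (summable_partition (fun p : ℕ × ℕ => mul_nonneg (hb p.1) (hF (p.1 * p.2)))
      (s := fun n => (fun p : ℕ × ℕ => p.1 * p.2) ⁻¹' {n})
      fun p => ⟨_, rfl, fun _ h => h.symm⟩).2 ⟨fun n => ?_, ?_⟩
    · rcases eq_or_ne n 0 with rfl | hn
      · convert summable_zero with p
        rw [show p.1.1 * p.1.2 = 0 from p.2, hF0, mul_zero]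
      · rw [Nat.preimage_mul_singleton hn]
        exact Finset.summable _ fun p : ℕ × ℕ => b p.1 * F (p.1 * p.2)
    · simpa only [tsum_preimage_mul_eq hF0] using ha.summable
  have hfib := hsum.hasSum.tsum_fiberwise (fun p : ℕ × ℕ => p.1 * p.2)
  simp only [tsum_preimage_mul_eq hF0] at hfib
  exact ha.unique hfib ▸ hsum.hasSum

theorem hasSum_inv_mul_pow_mul {q : ℝ} (hq : 1 < q) (d : ℕ) :
    HasSum (fun m : ℕ => (((d * m : ℕ) : ℝ) * q ^ (d * m))⁻¹)
      (Real.log (q ^ d / (q ^ d - 1)) / d) := by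
  -- for `d = 0` both sides vanish by the convention `x / 0 = 0`
  rcases eq_or_ne d 0 with rfl | hd
  · simp
  have hqd : 1 < q ^ d := one_lt_pow₀ hq hd
  have hy : |(q ^ d)⁻¹| < 1 := by
    rw [abs_inv, abs_of_pos (by positivity)]
    exact inv_lt_one_of_one_lt₀ hqd
  have hlog : -Real.log (1 - (q ^ d)⁻¹) = Real.log (q ^ d / (q ^ d - 1)) := by
    rw [← Real.log_inv]
    congr 1
    field_simp
  rw [← hlog]
  refine ((Real.hasSum_pow_div_neg_log hy).div_const d).congr_fun fun m => ?_
  push_cast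
  rw [pow_mul, inv_pow, mul_inv, mul_inv]
  ring

theorem hasSum_mul_log_div_sub_one {q : ℝ} (hq : 1 < q) {a : ℕ → ℝ}
    (ha : ∀ d, d ≠ 0 → 0 ≤ a d)
    (hs : Summable fun n : ℕ => (∑ d ∈ n.divisors, d * a d) / (n * q ^ n)) :
    HasSum (fun r : ℕ => a (r + 1) * Real.log (q ^ (r + 1) / (q ^ (r + 1) - 1)))
      (∑' n : ℕ, (∑ d ∈ n.divisors, d * a d) / (n * q ^ n)) := by
  have hb : 0 ≤ fun d : ℕ => d * a d := fun d => by
    rcases eq_or_ne d 0 with rfl | hd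
    · simp
    · exact mul_nonneg d.cast_nonneg (ha d hd)
  have hF : 0 ≤ fun n : ℕ => ((n : ℝ) * q ^ n)⁻¹ := fun n => by
    have : 0 < q := by linarith
    positivity
  have hpairs := hasSum_mul_mul_of_hasSum_divisors_sum hb hF (by simp)
    (hs.hasSum.congr_fun fun n => (div_eq_mul_inv _ _).symm)
  have hdivisors := hpairs.prod_fiberwise fun d =>
    (hasSum_inv_mul_pow_mul hq d).mul_left (d * a d)
  have hshift := (hasSum_nat_add_iff' 1).mpr hdivisors
  simp only [Finset.range_one, Finset.sum_singleton, CharP.cast_eq_zero, zero_mul,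
    sub_zero] at hshift
  refine hshift.congr_fun fun r => ?_
  field_simp

theorem generalized_brauer_siegel_general (q : ℕ) (hq : 2 ≤ q)
    (g : ℕ → ℕ) (hg : ∀ i, 1 ≤ g i)
    (ω : (i : ℕ) → Fin (2 * g i) → ℂ)
    (hω : ∀ i j, ‖ω i j‖ = 1)
    (Φ : ℕ → ℕ → ℕ)
    (hΦ : ∀ i, ∀ n : ℕ, 1 ≤ n →
      (∑ d ∈ n.divisors, (d * Φ i d : ℂ)) =
        (q : ℂ) ^ n + 1 - (Real.sqrt q : ℂ) ^ n * ∑ j, ω i j ^ n)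
    (h : ℕ → ℝ)
    (hh : ∀ i, (h i : ℂ) = (q : ℂ) ^ (g i) * ∏ j, (1 - ω i j * (Real.sqrt q : ℂ)⁻¹))
    (hgtop : Tendsto (fun i => (g i : ℝ)) atTop atTop)
    (φ : ℕ → ℝ)
    (hφ : ∀ r : ℕ, 1 ≤ r →
      Tendsto (fun i => (Φ i r : ℝ) / (g i : ℝ)) atTop (nhds (φ r))) :
    Summable (fun r : ℕ =>
      φ (r + 1) * Real.log ((q : ℝ) ^ (r + 1) / ((q : ℝ) ^ (r + 1) - 1))) ∧
    Tendsto (fun i => Real.log (h i) / (g i : ℝ)) atTop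
      (nhds (Real.log q +
        ∑' r : ℕ, φ (r + 1) * Real.log ((q : ℝ) ^ (r + 1) / ((q : ℝ) ^ (r + 1) - 1)))) := by
  have hq1 : (1 : ℝ) < q := Nat.one_lt_cast.2 hq
  set N : ℕ → ℕ → ℝ := fun i n => ∑ d ∈ n.divisors, (d : ℝ) * Φ i d with hN_def
  have hN : ∀ i n, 1 ≤ n →
      (N i n : ℂ) = ((q : ℝ) : ℂ) ^ n + 1 - (√(q : ℝ) : ℂ) ^ n * ∑ j, ω i j ^ n := by
    intro i n hn
    push_cast [hN_def]
    exact hΦ i n hn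
  have hlog : ∀ i, Real.log (h i) / g i =
      Real.log q + ∑' n : ℕ, (N i n - q ^ n - 1) / (n * q ^ n) / g i := fun i => by
    have hgi : (g i : ℝ) ≠ 0 := Nat.cast_ne_zero.2 (Nat.one_le_iff_ne_zero.1 (hg i))
    rw [tsum_div_const,
      (hasSum_log_classNumber hq1 (hω i) (hN i) (by exact_mod_cast hh i)).tsum_eq]
    field_simp
    ring
  have hbound : ∀ i n, 1 ≤ n → |N i n - q ^ n - 1| ≤ 2 * g i * √q ^ n := fun i n hn => by
    simpa using abs_sub_pow_sub_one_le (hω i) (hN i n hn)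
  have hlim : ∀ n, 1 ≤ n →
      Tendsto (fun i => N i n / g i) atTop (𝓝 (∑ d ∈ n.divisors, d * φ d)) := fun n _ => by
    simp only [hN_def, Finset.sum_div, mul_div_assoc]
    exact tendsto_finsetSum _ fun d hd => (hφ d (Nat.pos_of_mem_divisors hd)).const_mul _
  obtain ⟨hsum, htendsto⟩ := tendsto_tsum_div_of_abs_sub_le hq1 hgtop hbound hlim
  have hS := hasSum_mul_log_div_sub_one hq1 (fun d hd =>
    ge_of_tendsto' (hφ d (Nat.one_le_iff_ne_zero.2 hd)) fun i => by positivity) hsum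
  refine ⟨hS.summable, ?_⟩
  rw [hS.tsum_eq]
  exact (htendsto.const_add _).congr fun i => (hlog i).symm

theorem generalized_brauer_siegel (q : ℕ) (hq : 2 ≤ q)
    (g : ℕ → ℕ) (hg : ∀ i, 1 ≤ g i)
    (ω : (i : ℕ) → Fin (2 * g i) → ℂ)
    (hω : ∀ i j, ‖ω i j‖ = 1)
    (hconj : ∀ i, Multiset.map (starRingEnd ℂ) (List.ofFn (ω i) : Multiset ℂ) =
      (List.ofFn (ω i) : Multiset ℂ))
    (Φ : ℕ → ℕ → ℕ)
    (hΦ : ∀ i, ∀ n : ℕ, 1 ≤ n →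
      (∑ d ∈ n.divisors, (d * Φ i d : ℂ)) =
        (q : ℂ) ^ n + 1 - (Real.sqrt q : ℂ) ^ n * ∑ j, ω i j ^ n)
    (h : ℕ → ℝ)
    (hh : ∀ i, (h i : ℂ) = (q : ℂ) ^ (g i) * ∏ j, (1 - ω i j * (Real.sqrt q : ℂ)⁻¹))
    (hgtop : Tendsto (fun i => (g i : ℝ)) atTop atTop)
    (φ : ℕ → ℝ)
    (hφ : ∀ r : ℕ, 1 ≤ r →
      Tendsto (fun i => (Φ i r : ℝ) / (g i : ℝ)) atTop (nhds (φ r))) :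
    Summable (fun r : ℕ =>
      φ (r + 1) * Real.log ((q : ℝ) ^ (r + 1) / ((q : ℝ) ^ (r + 1) - 1))) ∧
    Tendsto (fun i => Real.log (h i) / (g i : ℝ)) atTop
      (nhds (Real.log q +
        ∑' r : ℕ, φ (r + 1) * Real.log ((q : ℝ) ^ (r + 1) / ((q : ℝ) ^ (r + 1) - 1)))) :=
  generalized_brauer_siegel_general q hq g hg ω hω Φ hΦ h hh hgtop φ hφ
end
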